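/- arXiv:2301.09518 — 4 statements merged into one kernel-verified Lean document; each statement's English description precedes it below -/
import Mathlib

section
/- In the setting of a generalised Morita context (A_i; M_ij; φ_ikj) of size n with A_t = R, a Morita context (R, S; N, L; ζ, θ), their composition (A′_i; M′_ij; φ′_ikj), the column-excision N_m and the row-excision L_m, the additive map |α| : N_m ⊗_{[A′_i; M′_ij]} L_m → [A_i; M_ij] induced by the column-row ligation is a homomorphism of [A_i; M_ij]–[A_i; M_ij]-bimodules. Moreover, if ζ : N ⊗_S L → R is surjective, then |α| is surjective. -/
universe u

open MulOpposite

/-- A biadditive map `M × X → Z` which is balanced over the ring `A`,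
where `ra` is a right `A`-action on `M` and `la` is a left `A`-action on `X`. -/
def IsBalancedMap (A : Type u) [Ring A] {M X Z : Type u}
    [AddCommGroup M] [AddCommGroup X] [AddCommGroup Z]
    (ra : M → A → M) (la : A → X → X) (g : M → X → Z) : Prop :=
  (∀ m m' x, g (m + m') x = g m x + g m' x) ∧
  (∀ m x x', g m (x + x') = g m x + g m x') ∧
  (∀ (a : A) m x, g (ra m a) x = g m (la a x))

/-- `τ : M × X → T` exhibits `T` as the tensor product `M ⊗[A] X` of a right
`A`-module `M` and a left `A`-module `X`: `τ` is biadditive and `A`-balanced and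
every biadditive `A`-balanced map out of `M × X` factors uniquely through `τ`. -/
structure IsBTensor (A : Type u) [Ring A] {M X : Type u}
    [AddCommGroup M] [AddCommGroup X]
    (ra : M → A → M) (la : A → X → X)
    (T : Type u) [AddCommGroup T] (τ : M → X → T) : Prop where
  balanced : IsBalancedMap A ra la τ
  lift : ∀ (Z : Type u) [AddCommGroup Z] (g : M → X → Z),
    IsBalancedMap A ra la g → ∃! h : T →+ Z, ∀ m x, h (τ m x) = g m x

/-- Surjectivity of the additive map `M ⊗ X → Z` induced by `g : M × X → Z`. -/
def TensorSurj {M X Z : Type u} [AddCommGroup Z] (g : M → X → Z) : Prop :=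
  AddSubgroup.closure {z : Z | ∃ m x, z = g m x} = ⊤

/-- A (classical) Morita context `(R, S; N, L; ζ, θ)`: `N` is an `R`–`S`-bimodule,
`L` is an `S`–`R`-bimodule, and `zeta : N ⊗[S] L → R`, `theta : L ⊗[R] N → S` are
bimodule homomorphisms (recorded here as balanced biadditive bilinear maps)
satisfying the mixed associativity conditions. -/
structure MoritaCtx (R S N L : Type u) [Ring R] [Ring S]
    [AddCommGroup N] [AddCommGroup L]
    [Module R N] [Module Sᵐᵒᵖ N] [SMulCommClass R Sᵐᵒᵖ N]
    [Module S L] [Module Rᵐᵒᵖ L] [SMulCommClass S Rᵐᵒᵖ L] where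
  zeta : N → L → R
  theta : L → N → S
  zeta_add_left : ∀ n n' l, zeta (n + n') l = zeta n l + zeta n' l
  zeta_add_right : ∀ n l l', zeta n (l + l') = zeta n l + zeta n l'
  zeta_balanced : ∀ (s : S) n l, zeta (op s • n) l = zeta n (s • l)
  zeta_left : ∀ (r : R) n l, zeta (r • n) l = r * zeta n l
  zeta_right : ∀ (r : R) n l, zeta n (op r • l) = zeta n l * r
  theta_add_left : ∀ l l' n, theta (l + l') n = theta l n + theta l' n
  theta_add_right : ∀ l n n', theta l (n + n') = theta l n + theta l n'
  theta_balanced : ∀ (r : R) l n, theta (op r • l) n = theta l (r • n)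
  theta_left : ∀ (s : S) l n, theta (s • l) n = s * theta l n
  theta_right : ∀ (s : S) l n, theta l (op s • n) = theta l n * s
  assoc_left : ∀ n l n', zeta n l • n' = op (theta l n') • n
  assoc_right : ∀ l n l', theta l n • l' = op (zeta n l') • l

/-- A generalised Morita context `(A_i; M_ij; φ_ikj)` of size `n`:
rings `A i`, `A_i`–`A_j`-bimodules `M i j` with `M i i` identified with the
regular bimodule `A i` via the additive isomorphisms `δ i`, and bimodule
homomorphisms `φ i k j : M i k ⊗[A k] M k j → M i j` (recorded as balanced
biadditive bilinear maps) which restrict to the action/multiplication maps on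
diagonal indices and satisfy the mixed associativity conditions. -/
structure GenMoritaCtx (n : ℕ) (A : Fin n → Type u) (M : Fin n → Fin n → Type u)
    [∀ i, Ring (A i)] [∀ i j, AddCommGroup (M i j)]
    [∀ i j, Module (A i) (M i j)] [∀ i j, Module ((A j)ᵐᵒᵖ) (M i j)]
    [∀ i j, SMulCommClass (A i) ((A j)ᵐᵒᵖ) (M i j)] where
  φ : ∀ i k j, M i k → M k j → M i j
  δ : ∀ i, A i ≃+ M i i
  φ_add_left : ∀ i k j (x x' : M i k) (y : M k j), φ i k j (x + x') y = φ i k j x y + φ i k j x' y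
  φ_add_right : ∀ i k j (x : M i k) (y y' : M k j), φ i k j x (y + y') = φ i k j x y + φ i k j x y'
  φ_balanced : ∀ i k j (a : A k) (x : M i k) (y : M k j), φ i k j (op a • x) y = φ i k j x (a • y)
  φ_smul_left : ∀ i k j (a : A i) (x : M i k) (y : M k j), φ i k j (a • x) y = a • φ i k j x y
  φ_smul_right : ∀ i k j (a : A j) (x : M i k) (y : M k j), φ i k j x (op a • y) = op a • φ i k j x y
  δ_mul_left : ∀ i (a b : A i), δ i (a * b) = a • δ i b
  δ_mul_right : ∀ i (a b : A i), δ i (a * b) = op b • δ i a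
  φ_diag_left : ∀ k j (a : A k) (y : M k j), φ k k j (δ k a) y = a • y
  φ_diag_right : ∀ i k (a : A k) (x : M i k), φ i k k x (δ k a) = op a • x
  φ_assoc : ∀ i h k j (x : M i h) (y : M h k) (z : M k j),
    φ i h j x (φ h k j y z) = φ i k j (φ i h k x y) z

variable {n : ℕ} {A : Fin n → Type u} {M : Fin n → Fin n → Type u}
    [∀ i, Ring (A i)] [∀ i j, AddCommGroup (M i j)]
    [∀ i j, Module (A i) (M i j)] [∀ i j, Module ((A j)ᵐᵒᵖ) (M i j)]
    [∀ i j, SMulCommClass (A i) ((A j)ᵐᵒᵖ) (M i j)]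

/-- The matrix multiplication `(x·y)_{ij} = ∑ k, φ_ikj (x_ik ⊗ y_kj)` on `⊕_{i,j} M i j`. -/
def matMul (ctx : GenMoritaCtx n A M) (x y : ∀ i j, M i j) : ∀ i j, M i j :=
  fun i j => ∑ k, ctx.φ i k j (x i k) (y k j)

/-- The identity matrix: `1_{A_i}` on the diagonal and `0` elsewhere. -/
def matOne (ctx : GenMoritaCtx n A M) : ∀ i j, M i j :=
  fun i j => if h : i = j then cast (congrArg (M i) h) (ctx.δ i 1) else 0

/-- `ε : Λ ≃ ⊕_{i,j} M i j` exhibits the ring `Λ` as the generalised matrix ring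
`[A_i; M_ij]` of the generalised Morita context `ctx`. -/
structure IsMatrixRing (ctx : GenMoritaCtx n A M) (Λ : Type u) [Ring Λ]
    (ε : Λ → ∀ i j, M i j) : Prop where
  bijective : Function.Bijective ε
  map_add : ∀ x y, ε (x + y) = ε x + ε y
  map_mul : ∀ x y, ε (x * y) = matMul ctx (ε x) (ε y)
  map_one : ε 1 = matOne ctx

/-- The scalar multiplication of an explicitly given module structure. -/
def msmul {Λ X : Type u} [Ring Λ] [AddCommGroup X] (inst : Module Λ X) (c : Λ) (x : X) : X :=
  letI := inst; c • x

section Composition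

variable (t : Fin n) (S N L : Type u) [Ring S]
  [AddCommGroup N] [AddCommGroup L]
  [Module (A t) N] [Module Sᵐᵒᵖ N] [SMulCommClass (A t) Sᵐᵒᵖ N]
  [Module S L] [Module ((A t)ᵐᵒᵖ) L] [SMulCommClass S ((A t)ᵐᵒᵖ) L]
  (A' : Fin n → Type u) (M' : Fin n → Fin n → Type u)
  [∀ i, Ring (A' i)] [∀ i j, AddCommGroup (M' i j)]
  [∀ i j, Module (A' i) (M' i j)] [∀ i j, Module ((A' j)ᵐᵒᵖ) (M' i j)]
  [∀ i j, SMulCommClass (A' i) ((A' j)ᵐᵒᵖ) (M' i j)]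

variable (A M)

/-- Data identifying the family `A'`, `M'` with the constituents of the composition
of a generalised Morita context `(A_i; M_ij; φ_ikj)` (with `A t = R`) with a Morita
context `(R, S; N, L; ζ, θ)`:  `A' t = S`, `A' i = A i` for `i ≠ t`, `M' t t = S`,
`M' i t = M i t ⊗[R] N` for `i ≠ t`, `M' t j = L ⊗[R] M t j` for `j ≠ t` and
`M' i j = M i j` for `i, j ≠ t`, where the tensor products are abstract tensor
products (universal property) and the identifications are compatible with all the
actions involved. -/
structure CompSetup : Type u where
  ρ : ∀ i, i ≠ t → (A' i ≃+* A i)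
  ρt : A' t ≃+* S
  ee : ∀ i j, i ≠ t → j ≠ t → (M i j ≃+ M' i j)
  tmulN : ∀ i, i ≠ t → (M i t → N → M' i t)
  tmulL : ∀ j, j ≠ t → (L → M t j → M' t j)
  uS : S ≃+ M' t t
  tmulN_tensor : ∀ i (hi : i ≠ t),
    IsBTensor (A t) (fun (m : M i t) a => op a • m) (fun a (x : N) => a • x)
      (M' i t) (tmulN i hi)
  tmulL_tensor : ∀ j (hj : j ≠ t),
    IsBTensor (A t) (fun (l : L) a => op a • l) (fun a (x : M t j) => a • x)
      (M' t j) (tmulL j hj)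
  ee_smul_left : ∀ i j (hi : i ≠ t) (hj : j ≠ t) (a' : A' i) (x : M i j),
    a' • ee i j hi hj x = ee i j hi hj (ρ i hi a' • x)
  ee_smul_right : ∀ i j (hi : i ≠ t) (hj : j ≠ t) (b' : A' j) (x : M i j),
    op b' • ee i j hi hj x = ee i j hi hj (op (ρ j hj b') • x)
  tmulN_smul_left : ∀ i (hi : i ≠ t) (a' : A' i) (m : M i t) (x : N),
    a' • tmulN i hi m x = tmulN i hi (ρ i hi a' • m) x
  tmulN_smul_right : ∀ i (hi : i ≠ t) (s' : A' t) (m : M i t) (x : N),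
    op s' • tmulN i hi m x = tmulN i hi m (op (ρt s') • x)
  tmulL_smul_left : ∀ j (hj : j ≠ t) (s' : A' t) (l : L) (m : M t j),
    s' • tmulL j hj l m = tmulL j hj (ρt s' • l) m
  tmulL_smul_right : ∀ j (hj : j ≠ t) (b' : A' j) (l : L) (m : M t j),
    op b' • tmulL j hj l m = tmulL j hj l (op (ρ j hj b') • m)
  uS_smul_left : ∀ (s' : A' t) (s : S), s' • uS s = uS (ρt s' * s)
  uS_smul_right : ∀ (s' : A' t) (s : S), op s' • uS s = uS (s * ρt s')

/-- `ctx'` is the composition of the generalised Morita context `ctx` (with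
`A t = R`) with the Morita context `mc = (R, S; N, L; ζ, θ)`: its identity
identifications are the given ones and its structure maps `φ'` are given by the
eight defining formulas of the composition (Definition 3.1 of the paper), stated
on pure tensors through the identifications of `cs`. -/
structure IsComposition (ctx : GenMoritaCtx n A M) (mc : MoritaCtx (A t) S N L)
    (cs : CompSetup A M t S N L A' M') (ctx' : GenMoritaCtx n A' M') : Prop where
  delta_spec : ∀ i (hi : i ≠ t) (a' : A' i),
    ctx'.δ i a' = cs.ee i i hi hi (ctx.δ i (cs.ρ i hi a'))
  delta_t_spec : ∀ s' : A' t, ctx'.δ t s' = cs.uS (cs.ρt s')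
  phi_ttt : ∀ s s' : S, ctx'.φ t t t (cs.uS s) (cs.uS s') = cs.uS (s * s')
  phi_itt : ∀ i (hi : i ≠ t) (m : M i t) (x : N) (s : S),
    ctx'.φ i t t (cs.tmulN i hi m x) (cs.uS s) = cs.tmulN i hi m (op s • x)
  phi_ttj : ∀ j (hj : j ≠ t) (s : S) (l : L) (m : M t j),
    ctx'.φ t t j (cs.uS s) (cs.tmulL j hj l m) = cs.tmulL j hj (s • l) m
  phi_tkt : ∀ k (hk : k ≠ t) (l : L) (m : M t k) (m' : M k t) (x : N),
    ctx'.φ t k t (cs.tmulL k hk l m) (cs.tmulN k hk m' x)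
      = cs.uS (mc.theta (op ((ctx.δ t).symm (ctx.φ t k t m m')) • l) x)
  phi_ikt : ∀ i k (hi : i ≠ t) (hk : k ≠ t) (z : M i k) (m : M k t) (x : N),
    ctx'.φ i k t (cs.ee i k hi hk z) (cs.tmulN k hk m x)
      = cs.tmulN i hi (ctx.φ i k t z m) x
  phi_tkj : ∀ k j (hk : k ≠ t) (hj : j ≠ t) (l : L) (m : M t k) (y : M k j),
    ctx'.φ t k j (cs.tmulL k hk l m) (cs.ee k j hk hj y)
      = cs.tmulL j hj l (ctx.φ t k j m y)
  phi_itj : ∀ i j (hi : i ≠ t) (hj : j ≠ t) (m : M i t) (x : N) (l : L) (m' : M t j),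
    ctx'.φ i t j (cs.tmulN i hi m x) (cs.tmulL j hj l m')
      = cs.ee i j hi hj (ctx.φ i t j (op (mc.zeta x l) • m) m')
  phi_ikj : ∀ i k j (hi : i ≠ t) (hk : k ≠ t) (hj : j ≠ t) (z : M i k) (y : M k j),
    ctx'.φ i k j (cs.ee i k hi hk z) (cs.ee k j hk hj y)
      = cs.ee i j hi hj (ctx.φ i k j z y)

end Composition

section Excision

variable (t : Fin n) (S N L : Type u) [Ring S]
  [AddCommGroup N] [AddCommGroup L]
  [Module (A t) N] [Module Sᵐᵒᵖ N] [SMulCommClass (A t) Sᵐᵒᵖ N]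
  [Module S L] [Module ((A t)ᵐᵒᵖ) L] [SMulCommClass S ((A t)ᵐᵒᵖ) L]
  (A' : Fin n → Type u) (M' : Fin n → Fin n → Type u)
  [∀ i, Ring (A' i)] [∀ i j, AddCommGroup (M' i j)]
  [∀ i j, Module (A' i) (M' i j)] [∀ i j, Module ((A' j)ᵐᵒᵖ) (M' i j)]
  [∀ i j, SMulCommClass (A' i) ((A' j)ᵐᵒᵖ) (M' i j)]
  (NN : Fin n → Fin n → Type u) [∀ i j, AddCommGroup (NN i j)]
  (LL : Fin n → Fin n → Type u) [∀ i j, AddCommGroup (LL i j)]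

variable (A M)

/-- Data identifying the family `NN` with the column-excision: `NN i j = M i j`
for `j ≠ t` and `NN i t = M i t ⊗[R] N` (an abstract tensor product) for all `i`
(in particular `NN t t = (M t t) ⊗[R] N`, i.e. `R ⊗[R] N`). -/
structure ColExc where
  en : ∀ i j, j ≠ t → (M i j ≃+ NN i j)
  π : ∀ i, M i t → N → NN i t
  π_tensor : ∀ i,
    IsBTensor (A t) (fun (m : M i t) a => op a • m) (fun a (x : N) => a • x)
      (NN i t) (π i)

/-- Data identifying the family `LL` with the row-excision: `LL i j = M i j`
for `i ≠ t` and `LL t j = L ⊗[R] M t j` (an abstract tensor product) for all `j`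
(in particular `LL t t = L ⊗[R] (M t t)`, i.e. `L ⊗[R] R`). -/
structure RowExc where
  el : ∀ i j, i ≠ t → (M i j ≃+ LL i j)
  lp : ∀ j, L → M t j → LL t j
  lp_tensor : ∀ j,
    IsBTensor (A t) (fun (l : L) a => op a • l) (fun a (x : M t j) => a • x)
      (LL t j) (lp j)

/-- The component maps `β_ikj` of the left action of the generalised matrix ring
`[A_i; M_ij]` on the column-excision: `β_ikj = φ_ikj` for `j ≠ t` and
`β_ikt = φ_ikt ⊗ 1_N` for `j = t`, stated on pure tensors. -/
structure ColExcLeft (ctx : GenMoritaCtx n A M) (ce : ColExc A M t N NN)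
    (β : ∀ i k j, M i k → NN k j → NN i j) : Prop where
  add_left : ∀ i k j (x x' : M i k) (y : NN k j),
    β i k j (x + x') y = β i k j x y + β i k j x' y
  add_right : ∀ i k j (x : M i k) (y y' : NN k j),
    β i k j x (y + y') = β i k j x y + β i k j x y'
  spec_ne : ∀ i k j (hj : j ≠ t) (x : M i k) (y : M k j),
    β i k j x (ce.en k j hj y) = ce.en i j hj (ctx.φ i k j x y)
  spec_t : ∀ i k (z : M i k) (m : M k t) (x : N),
    β i k t z (ce.π k m x) = ce.π i (ctx.φ i k t z m) x

/-- The component maps `β'_ikj` of the right action of the generalised matrix ring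
`[A'_i; M'_ij]` of the composition on the column-excision, stated on pure tensors
through the identifications: `β'_ikj = φ'_ikj` for `i ≠ t`, and on row `t`:
`β'_ttt(r ⊗ n ⊗ s) = r ⊗ (n·s)`, `β'_ttj(r ⊗ n ⊗ l ⊗ m) = (r·ζ(n ⊗ l))·m` for
`j ≠ t`, `β'_tht = φ_tht ⊗ 1_N` for `h ≠ t` and `β'_thj = φ_thj` for `h, j ≠ t`. -/
structure ColExcRight (ctx : GenMoritaCtx n A M) (mc : MoritaCtx (A t) S N L)
    (cs : CompSetup A M t S N L A' M') (ce : ColExc A M t N NN)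
    (β' : ∀ i k j, NN i k → M' k j → NN i j) : Prop where
  add_left : ∀ i k j (x x' : NN i k) (y : M' k j),
    β' i k j (x + x') y = β' i k j x y + β' i k j x' y
  add_right : ∀ i k j (x : NN i k) (y y' : M' k j),
    β' i k j x (y + y') = β' i k j x y + β' i k j x y'
  spec₁ : ∀ i k j (hk : k ≠ t) (hj : j ≠ t) (x : M i k) (y : M k j),
    β' i k j (ce.en i k hk x) (cs.ee k j hk hj y) = ce.en i j hj (ctx.φ i k j x y)
  spec₂ : ∀ i k (hk : k ≠ t) (x : M i k) (m : M k t) (nn : N),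
    β' i k t (ce.en i k hk x) (cs.tmulN k hk m nn) = ce.π i (ctx.φ i k t x m) nn
  spec₃ : ∀ i j (hj : j ≠ t) (m : M i t) (nn : N) (l : L) (m' : M t j),
    β' i t j (ce.π i m nn) (cs.tmulL j hj l m')
      = ce.en i j hj (ctx.φ i t j (op (mc.zeta nn l) • m) m')
  spec₄ : ∀ i (m : M i t) (nn : N) (s : S),
    β' i t t (ce.π i m nn) (cs.uS s) = ce.π i m (op s • nn)

/-- The component maps `γ'_ikj` of the left action of `[A'_i; M'_ij]` on the
row-excision, stated on pure tensors through the identifications: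
`γ'_ikj = φ'_ikj` for `j ≠ t`, and on column `t`: `γ'_ttt(s ⊗ l ⊗ r) = (s·l) ⊗ r`,
`γ'_tkt = 1_L ⊗ φ_tkt` for `k ≠ t`, `γ'_itt(m ⊗ n ⊗ l ⊗ r) = m·(ζ(n ⊗ l)·r)` for
`i ≠ t` and `γ'_ikt = φ_ikt` for `i, k ≠ t`. -/
structure RowExcLeft (ctx : GenMoritaCtx n A M) (mc : MoritaCtx (A t) S N L)
    (cs : CompSetup A M t S N L A' M') (re : RowExc A M t L LL)
    (γ' : ∀ i k j, M' i k → LL k j → LL i j) : Prop where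
  add_left : ∀ i k j (x x' : M' i k) (y : LL k j),
    γ' i k j (x + x') y = γ' i k j x y + γ' i k j x' y
  add_right : ∀ i k j (x : M' i k) (y y' : LL k j),
    γ' i k j x (y + y') = γ' i k j x y + γ' i k j x y'
  spec₁ : ∀ i k j (hi : i ≠ t) (hk : k ≠ t) (x : M i k) (y : M k j),
    γ' i k j (cs.ee i k hi hk x) (re.el k j hk y) = re.el i j hi (ctx.φ i k j x y)
  spec₂ : ∀ k j (hk : k ≠ t) (l : L) (m : M t k) (y : M k j),
    γ' t k j (cs.tmulL k hk l m) (re.el k j hk y) = re.lp j l (ctx.φ t k j m y)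
  spec₃ : ∀ i j (hi : i ≠ t) (m : M i t) (nn : N) (l : L) (m' : M t j),
    γ' i t j (cs.tmulN i hi m nn) (re.lp j l m')
      = re.el i j hi (ctx.φ i t j (op (mc.zeta nn l) • m) m')
  spec₄ : ∀ j (s : S) (l : L) (m : M t j),
    γ' t t j (cs.uS s) (re.lp j l m) = re.lp j (s • l) m

/-- The component maps `γ_ikj` of the right action of `[A_i; M_ij]` on the
row-excision: `γ_ikj = φ_ikj` for `i ≠ t` and `γ_tkj = 1_L ⊗ φ_tkj` on row `t`,
stated on pure tensors. -/
structure RowExcRight (ctx : GenMoritaCtx n A M) (re : RowExc A M t L LL)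
    (γ : ∀ i k j, LL i k → M k j → LL i j) : Prop where
  add_left : ∀ i k j (x x' : LL i k) (y : M k j),
    γ i k j (x + x') y = γ i k j x y + γ i k j x' y
  add_right : ∀ i k j (x : LL i k) (y y' : M k j),
    γ i k j x (y + y') = γ i k j x y + γ i k j x y'
  spec_ne : ∀ i k j (hi : i ≠ t) (x : M i k) (y : M k j),
    γ i k j (re.el i k hi x) y = re.el i j hi (ctx.φ i k j x y)
  spec_t : ∀ k j (l : L) (m : M t k) (y : M k j),
    γ t k j (re.lp k l m) y = re.lp j l (ctx.φ t k j m y)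

/-- The component maps `α_ikj : N_ik ⊗ L_kj → M_ij` of the column-row ligation:
`α_ikj = φ_ikj` for `k ≠ t` and
`α_itj(m ⊗ n ⊗ l ⊗ m') = φ_itj((m·ζ(n ⊗ l)) ⊗ m')` for `k = t`,
stated on pure tensors. -/
structure ColRowLigation (ctx : GenMoritaCtx n A M) (mc : MoritaCtx (A t) S N L)
    (ce : ColExc A M t N NN) (re : RowExc A M t L LL)
    (α : ∀ i k j, NN i k → LL k j → M i j) : Prop where
  add_left : ∀ i k j (x x' : NN i k) (y : LL k j),
    α i k j (x + x') y = α i k j x y + α i k j x' y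
  add_right : ∀ i k j (x : NN i k) (y y' : LL k j),
    α i k j x (y + y') = α i k j x y + α i k j x y'
  spec_ne : ∀ i k j (hk : k ≠ t) (x : M i k) (y : M k j),
    α i k j (ce.en i k hk x) (re.el k j hk y) = ctx.φ i k j x y
  spec_t : ∀ i j (m : M i t) (nn : N) (l : L) (m' : M t j),
    α i t j (ce.π i m nn) (re.lp j l m') = ctx.φ i t j (op (mc.zeta nn l) • m) m'

/-- The component maps `α'_ikj : L_ik ⊗ N_kj → M'_ij` of the row-column ligation:
`α'_ikj = φ_ikj` for `i, j ≠ t`, `α'_ikt = φ_ikt ⊗ 1_N` for `i ≠ t = j`,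
`α'_tkj = 1_L ⊗ φ_tkj` for `i = t ≠ j` and
`α'_tkt(l ⊗ m ⊗ m' ⊗ n) = θ((l·φ_tkt(m ⊗ m')) ⊗ n)` for `i = t = j`,
stated on pure tensors through the identifications. -/
structure RowColLigation (ctx : GenMoritaCtx n A M) (mc : MoritaCtx (A t) S N L)
    (cs : CompSetup A M t S N L A' M') (ce : ColExc A M t N NN)
    (re : RowExc A M t L LL)
    (α' : ∀ i k j, LL i k → NN k j → M' i j) : Prop where
  add_left : ∀ i k j (x x' : LL i k) (y : NN k j),
    α' i k j (x + x') y = α' i k j x y + α' i k j x' y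
  add_right : ∀ i k j (x : LL i k) (y y' : NN k j),
    α' i k j x (y + y') = α' i k j x y + α' i k j x y'
  spec₁ : ∀ i k j (hi : i ≠ t) (hj : j ≠ t) (x : M i k) (y : M k j),
    α' i k j (re.el i k hi x) (ce.en k j hj y) = cs.ee i j hi hj (ctx.φ i k j x y)
  spec₂ : ∀ i k (hi : i ≠ t) (x : M i k) (m : M k t) (nn : N),
    α' i k t (re.el i k hi x) (ce.π k m nn) = cs.tmulN i hi (ctx.φ i k t x m) nn
  spec₃ : ∀ k j (hj : j ≠ t) (l : L) (m : M t k) (y : M k j),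
    α' t k j (re.lp k l m) (ce.en k j hj y) = cs.tmulL j hj l (ctx.φ t k j m y)
  spec₄ : ∀ k (l : L) (m : M t k) (m' : M k t) (nn : N),
    α' t k t (re.lp k l m) (ce.π k m' nn)
      = cs.uS (mc.theta (op ((ctx.δ t).symm (ctx.φ t k t m m')) • l) nn)

end Excision

section Helpers

variable {A : Type u} [Ring A] {M X T : Type u}
  [AddCommGroup M] [AddCommGroup X] [AddCommGroup T]
  {ra : M → A → M} {la : A → X → X} {τ : M → X → T}

/-- Pure tensors generate the tensor product as an additive group. -/
theorem IsBTensor.mem_closure (h : IsBTensor A ra la T τ) (z : T) :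
    z ∈ AddSubgroup.closure {z : T | ∃ m x, z = τ m x} := by
  set G := AddSubgroup.closure {z : T | ∃ m x, z = τ m x} with hG
  have hmem : ∀ m x, τ m x ∈ G := fun m x =>
    AddSubgroup.subset_closure ⟨m, x, rfl⟩
  have balG : IsBalancedMap A ra la (fun m x => (⟨τ m x, hmem m x⟩ : G)) := by
    refine ⟨fun m m' x => ?_, fun m x x' => ?_, fun a m x => ?_⟩ <;>
      exact Subtype.ext (by
        first
        | exact h.balanced.1 m m' x
        | exact h.balanced.2.1 m x x'
        | exact h.balanced.2.2 a m x)
  obtain ⟨h₀, hh₀, -⟩ := h.lift G (fun m x => (⟨τ m x, hmem m x⟩ : G)) balG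
  obtain ⟨u, -, huniq⟩ := h.lift T τ h.balanced
  have e₁ : G.subtype.comp h₀ = u := huniq _ (fun m x => by
    simp [AddMonoidHom.comp_apply, hh₀ m x])
  have e₂ : AddMonoidHom.id T = u := huniq _ (fun m x => rfl)
  have : z = (h₀ z : T) := by
    have := congrArg (fun f : T →+ T => f z) (e₂.trans e₁.symm)
    simpa using this
  exact this ▸ (h₀ z).2

/-- Induction principle for tensor products. -/
theorem IsBTensor.induction_on (h : IsBTensor A ra la T τ) {P : T → Prop}
    (h0 : P 0) (hadd : ∀ a b, P a → P b → P (a + b)) (hneg : ∀ a, P a → P (-a))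
    (hpure : ∀ m x, P (τ m x)) (z : T) : P z := by
  have hz := h.mem_closure z
  exact AddSubgroup.closure_induction (p := fun w _ => P w)
    (fun w hw => by obtain ⟨m, x, rfl⟩ := hw; exact hpure m x)
    h0 (fun a b _ _ => hadd a b) (fun a _ => hneg a) hz

/-- Additive maps agreeing on pure tensors agree everywhere. -/
theorem IsBTensor.ext_hom (h : IsBTensor A ra la T τ) {Z : Type u}
    [AddCommGroup Z] (f f' : T →+ Z) (he : ∀ m x, f (τ m x) = f' (τ m x))
    (z : T) : f z = f' z := by
  refine h.induction_on (P := fun z => f z = f' z) (by simp)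
    (fun a b ha hb => by simp [ha, hb]) (fun a ha => by simp [ha]) he z

end Helpers

set_option maxHeartbeats 3200000 in
/-- the additive map `|α| : N_m ⊗_{[A'_i; M'_ij]} L_m → [A_i; M_ij]`
induced by the column-row ligation is a homomorphism of
`[A_i; M_ij]`–`[A_i; M_ij]`-bimodules; moreover if `ζ : N ⊗[S] L → R` is
surjective then it is surjective. -/
theorem stmt8 {n : ℕ} {A : Fin n → Type u} {M : Fin n → Fin n → Type u}
    [∀ i, Ring (A i)] [∀ i j, AddCommGroup (M i j)]
    [∀ i j, Module (A i) (M i j)] [∀ i j, Module ((A j)ᵐᵒᵖ) (M i j)]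
    [∀ i j, SMulCommClass (A i) ((A j)ᵐᵒᵖ) (M i j)]
    (ctx : GenMoritaCtx n A M) (t : Fin n)
    (S N L : Type u) [Ring S] [AddCommGroup N] [AddCommGroup L]
    [Module (A t) N] [Module Sᵐᵒᵖ N] [SMulCommClass (A t) Sᵐᵒᵖ N]
    [Module S L] [Module ((A t)ᵐᵒᵖ) L] [SMulCommClass S ((A t)ᵐᵒᵖ) L]
    (mc : MoritaCtx (A t) S N L)
    (A' : Fin n → Type u) (M' : Fin n → Fin n → Type u)
    [∀ i, Ring (A' i)] [∀ i j, AddCommGroup (M' i j)]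
    [∀ i j, Module (A' i) (M' i j)] [∀ i j, Module ((A' j)ᵐᵒᵖ) (M' i j)]
    [∀ i j, SMulCommClass (A' i) ((A' j)ᵐᵒᵖ) (M' i j)]
    (cs : CompSetup A M t S N L A' M')
    (ctx' : GenMoritaCtx n A' M')
    (hcomp : IsComposition A M t S N L A' M' ctx mc cs ctx')
    (Λ : Type u) [Ring Λ] (εΛ : Λ → ∀ i j, M i j) (hΛ : IsMatrixRing ctx Λ εΛ)
    (Λ' : Type u) [Ring Λ'] (εΛ' : Λ' → ∀ i j, M' i j) (hΛ' : IsMatrixRing ctx' Λ' εΛ')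
    (NN : Fin n → Fin n → Type u) [∀ i j, AddCommGroup (NN i j)]
    (ce : ColExc A M t N NN)
    (LL : Fin n → Fin n → Type u) [∀ i j, AddCommGroup (LL i j)]
    (re : RowExc A M t L LL)
    -- the [A_i; M_ij]–[A'_i; M'_ij]-bimodule structure on the column-excision N_m
    [Module Λ (∀ i j, NN i j)] [Module Λ'ᵐᵒᵖ (∀ i j, NN i j)]
    [SMulCommClass Λ Λ'ᵐᵒᵖ (∀ i j, NN i j)]
    (β : ∀ i k j, M i k → NN k j → NN i j)
    (hβ : ColExcLeft A M t N NN ctx ce β)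
    (β' : ∀ i k j, NN i k → M' k j → NN i j)
    (hβ' : ColExcRight A M t S N L A' M' NN ctx mc cs ce β')
    (hNsmulL : ∀ (c : Λ) (x : ∀ i j, NN i j) (i j : Fin n),
      (c • x) i j = ∑ k, β i k j (εΛ c i k) (x k j))
    (hNsmulR : ∀ (c' : Λ') (x : ∀ i j, NN i j) (i j : Fin n),
      (op c' • x) i j = ∑ k, β' i k j (x i k) (εΛ' c' k j))
    -- the [A'_i; M'_ij]–[A_i; M_ij]-bimodule structure on the row-excision L_m
    [Module Λ' (∀ i j, LL i j)] [Module Λᵐᵒᵖ (∀ i j, LL i j)]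
    [SMulCommClass Λ' Λᵐᵒᵖ (∀ i j, LL i j)]
    (γ' : ∀ i k j, M' i k → LL k j → LL i j)
    (hγ' : RowExcLeft A M t S N L A' M' LL ctx mc cs re γ')
    (γ : ∀ i k j, LL i k → M k j → LL i j)
    (hγ : RowExcRight A M t L LL ctx re γ)
    (hLsmulL : ∀ (c' : Λ') (y : ∀ i j, LL i j) (i j : Fin n),
      (c' • y) i j = ∑ k, γ' i k j (εΛ' c' i k) (y k j))
    (hLsmulR : ∀ (c : Λ) (y : ∀ i j, LL i j) (i j : Fin n),
      (op c • y) i j = ∑ k, γ i k j (y i k) (εΛ c k j))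
    -- the column-row ligation and the map |α| it induces into Λ = [A_i; M_ij]
    (α : ∀ i k j, NN i k → LL k j → M i j)
    (hα : ColRowLigation A M t S N L NN LL ctx mc ce re α)
    (Abar : (∀ i j, NN i j) → (∀ i j, LL i j) → Λ)
    (hAbar : ∀ x y, εΛ (Abar x y) = fun i j => ∑ k, α i k j (x i k) (y k j))
    -- an abstract tensor product T = N_m ⊗_{[A'_i; M'_ij]} L_m with its
    -- left and right [A_i; M_ij]-module structure, and the induced map g = |α|
    (T : Type u) [AddCommGroup T]
    (τT : (∀ i j, NN i j) → (∀ i j, LL i j) → T)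
    (hT : IsBTensor Λ' (fun (x : ∀ i j, NN i j) (c' : Λ') => op c' • x)
      (fun (c' : Λ') (y : ∀ i j, LL i j) => c' • y) T τT)
    [Module Λ T] [Module Λᵐᵒᵖ T]
    (hTL : ∀ (c : Λ) x y, c • τT x y = τT (c • x) y)
    (hTR : ∀ (c : Λ) x y, op c • τT x y = τT x (op c • y))
    (g : T →+ Λ) (hg : ∀ x y, g (τT x y) = Abar x y) :
    (∀ (c : Λ) (z : T), g (c • z) = c * g z) ∧
    (∀ (c : Λ) (z : T), g (op c • z) = g z * c) ∧
    (TensorSurj mc.zeta → Function.Surjective g) := by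
  classical
  -- zero lemmas for α
  have α0l : ∀ i k j (y : LL k j), α i k j 0 y = 0 := fun i k j y =>
    map_zero (AddMonoidHom.mk' (fun x => α i k j x y) (fun a b => hα.add_left i k j a b y))
  have α0r : ∀ i k j (x : NN i k), α i k j x 0 = 0 := fun i k j x =>
    map_zero (AddMonoidHom.mk' (fun y => α i k j x y) (fun a b => hα.add_right i k j x a b))
  -- additivity of Abar
  have Abar_add_left : ∀ x x' y, Abar (x + x') y = Abar x y + Abar x' y := fun x x' y => by
    rw [← hg, ← hg, ← hg, hT.balanced.1 x x' y, map_add]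
  have Abar_add_right : ∀ x y y', Abar x (y + y') = Abar x y + Abar x y' := fun x y y' => by
    rw [← hg, ← hg, ← hg, hT.balanced.2.1 x y y', map_add]
  have Abar_bal : ∀ (c' : Λ') x y, Abar (op c' • x) y = Abar x (c' • y) := fun c' x y => by
    rw [← hg, ← hg]; exact congrArg g (hT.balanced.2.2 c' x y)
  -- sum-pulling lemmas
  have αsuml : ∀ i k j (f : Fin n → NN i k) (y : LL k j),
      α i k j (∑ h, f h) y = ∑ h, α i k j (f h) y := fun i k j f y =>
    map_sum (AddMonoidHom.mk' (fun x => α i k j x y)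
      (fun a b => hα.add_left i k j a b y)) f Finset.univ
  have αsumr : ∀ i k j (x : NN i k) (f : Fin n → LL k j),
      α i k j x (∑ h, f h) = ∑ h, α i k j x (f h) := fun i k j x f =>
    map_sum (AddMonoidHom.mk' (fun y => α i k j x y)
      (fun a b => hα.add_right i k j x a b)) f Finset.univ
  have φsumr : ∀ i k j (m : M i k) (f : Fin n → M k j),
      ctx.φ i k j m (∑ h, f h) = ∑ h, ctx.φ i k j m (f h) := fun i k j m f =>
    map_sum (AddMonoidHom.mk' (fun y => ctx.φ i k j m y)
      (fun a b => ctx.φ_add_right i k j m a b)) f Finset.univ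
  have φsuml : ∀ i k j (f : Fin n → M i k) (m : M k j),
      ctx.φ i k j (∑ h, f h) m = ∑ h, ctx.φ i k j (f h) m := fun i k j f m =>
    map_sum (AddMonoidHom.mk' (fun x => ctx.φ i k j x m)
      (fun a b => ctx.φ_add_left i k j a b m)) f Finset.univ
  -- key pointwise identity for the left action
  have keyA : ∀ i k h j (m : M i k) (x : NN k h) (y : LL h j),
      α i h j (β i k h m x) y = ctx.φ i k j m (α k h j x y) := by
    intro i k h j m x y
    by_cases hh : h = t
    · subst h
      have pure : ∀ (m₀ : M k t) (nn : N) (y : LL t j),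
          α i t j (ce.π i (ctx.φ i k t m m₀) nn) y
            = ctx.φ i k j m (α k t j (ce.π k m₀ nn) y) := by
        intro m₀ nn y
        refine (re.lp_tensor j).ext_hom
          (AddMonoidHom.mk' (fun y => α i t j (ce.π i (ctx.φ i k t m m₀) nn) y)
            (fun a b => hα.add_right i t j _ a b))
          (AddMonoidHom.mk' (fun y => ctx.φ i k j m (α k t j (ce.π k m₀ nn) y))
            (fun a b => by simp only [hα.add_right, ctx.φ_add_right]))
          (fun l m' => ?_) y
        show α i t j (ce.π i (ctx.φ i k t m m₀) nn) (re.lp j l m')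
            = ctx.φ i k j m (α k t j (ce.π k m₀ nn) (re.lp j l m'))
        rw [hα.spec_t, hα.spec_t, ctx.φ_assoc, ctx.φ_smul_right]
      refine (ce.π_tensor k).ext_hom
        (AddMonoidHom.mk' (fun x => α i t j (β i k t m x) y)
          (fun a b => by simp only [hβ.add_right, hα.add_left]))
        (AddMonoidHom.mk' (fun x => ctx.φ i k j m (α k t j x y))
          (fun a b => by simp only [hα.add_left, ctx.φ_add_right]))
        (fun m₀ nn => ?_) x
      show α i t j (β i k t m (ce.π k m₀ nn)) y
          = ctx.φ i k j m (α k t j (ce.π k m₀ nn) y)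
      rw [hβ.spec_t]
      exact pure m₀ nn y
    · obtain ⟨x₀, rfl⟩ := (ce.en k h hh).surjective x
      obtain ⟨y₀, rfl⟩ := (re.el h j hh).surjective y
      rw [hβ.spec_ne i k h hh, hα.spec_ne i h j hh, hα.spec_ne k h j hh]
      exact (ctx.φ_assoc i k h j m x₀ y₀).symm
  -- key pointwise identity for the right action
  have keyB : ∀ i h k j (x : NN i h) (y : LL h k) (m : M k j),
      α i h j x (γ h k j y m) = ctx.φ i k j (α i h k x y) m := by
    intro i h k j x y m
    by_cases hh : h = t
    · subst h
      have pure : ∀ (m₀ : M i t) (nn : N) (y : LL t k),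
          α i t j (ce.π i m₀ nn) (γ t k j y m)
            = ctx.φ i k j (α i t k (ce.π i m₀ nn) y) m := by
        intro m₀ nn y
        refine (re.lp_tensor k).ext_hom
          (AddMonoidHom.mk' (fun y => α i t j (ce.π i m₀ nn) (γ t k j y m))
            (fun a b => by simp only [hγ.add_left, hα.add_right]))
          (AddMonoidHom.mk' (fun y => ctx.φ i k j (α i t k (ce.π i m₀ nn) y) m)
            (fun a b => by simp only [hα.add_right, ctx.φ_add_left]))
          (fun l m₁ => ?_) y
        show α i t j (ce.π i m₀ nn) (γ t k j (re.lp k l m₁) m)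
            = ctx.φ i k j (α i t k (ce.π i m₀ nn) (re.lp k l m₁)) m
        rw [hγ.spec_t, hα.spec_t, hα.spec_t, ctx.φ_assoc]
      refine (ce.π_tensor i).ext_hom
        (AddMonoidHom.mk' (fun x => α i t j x (γ t k j y m))
          (fun a b => hα.add_left i t j a b _))
        (AddMonoidHom.mk' (fun x => ctx.φ i k j (α i t k x y) m)
          (fun a b => by simp only [hα.add_left, ctx.φ_add_left]))
        (fun m₀ nn => pure m₀ nn y) x
    · obtain ⟨x₀, rfl⟩ := (ce.en i h hh).surjective x
      obtain ⟨y₀, rfl⟩ := (re.el h k hh).surjective y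
      rw [hγ.spec_ne h k j hh, hα.spec_ne i h j hh, hα.spec_ne i h k hh]
      exact ctx.φ_assoc i h k j x₀ y₀ m
  -- Abar intertwines the left action with left multiplication
  have lemA : ∀ (c : Λ) x y, Abar (c • x) y = c * Abar x y := by
    intro c x y
    apply hΛ.bijective.1
    rw [hΛ.map_mul, hAbar, hAbar]
    funext i j
    show ∑ h, α i h j ((c • x) i h) (y h j)
        = matMul ctx (εΛ c) (fun i j => ∑ k, α i k j (x i k) (y k j)) i j
    calc ∑ h, α i h j ((c • x) i h) (y h j)
        = ∑ h, ∑ k, α i h j (β i k h (εΛ c i k) (x k h)) (y h j) := by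
          refine Finset.sum_congr rfl fun h _ => ?_
          rw [hNsmulL]
          exact αsuml i h j _ (y h j)
      _ = ∑ k, ∑ h, α i h j (β i k h (εΛ c i k) (x k h)) (y h j) := Finset.sum_comm
      _ = ∑ k, ctx.φ i k j (εΛ c i k) (∑ h, α k h j (x k h) (y h j)) := by
          refine Finset.sum_congr rfl fun k _ => ?_
          rw [φsumr]
          exact Finset.sum_congr rfl fun h _ => keyA i k h j _ _ _
      _ = matMul ctx (εΛ c) (fun i j => ∑ k, α i k j (x i k) (y k j)) i j := rfl
  -- Abar intertwines the right action with right multiplication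
  have lemB : ∀ (c : Λ) x y, Abar x (op c • y) = Abar x y * c := by
    intro c x y
    apply hΛ.bijective.1
    rw [hΛ.map_mul, hAbar, hAbar]
    funext i j
    show ∑ h, α i h j (x i h) ((op c • y) h j)
        = matMul ctx (fun i j => ∑ k, α i k j (x i k) (y k j)) (εΛ c) i j
    calc ∑ h, α i h j (x i h) ((op c • y) h j)
        = ∑ h, ∑ k, α i h j (x i h) (γ h k j (y h k) (εΛ c k j)) := by
          refine Finset.sum_congr rfl fun h _ => ?_
          rw [hLsmulR]
          exact αsumr i h j _ _
      _ = ∑ k, ∑ h, α i h j (x i h) (γ h k j (y h k) (εΛ c k j)) := Finset.sum_comm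
      _ = ∑ k, ctx.φ i k j (∑ h, α i h k (x i h) (y h k)) (εΛ c k j) := by
          refine Finset.sum_congr rfl fun k _ => ?_
          rw [φsuml]
          exact Finset.sum_congr rfl fun h _ => keyB i h k j _ _ _
      _ = matMul ctx (fun i j => ∑ k, α i k j (x i k) (y k j)) (εΛ c) i j := rfl
  refine ⟨?_, ?_, ?_⟩
  · -- left linearity
    intro c z
    have bal : IsBalancedMap Λ' (fun (x : ∀ i j, NN i j) (c' : Λ') => op c' • x)
        (fun (c' : Λ') (y : ∀ i j, LL i j) => c' • y) (fun x y => c * Abar x y) :=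
      ⟨fun m m' x => by simp only [Abar_add_left, mul_add],
       fun m x x' => by simp only [Abar_add_right, mul_add],
       fun a m x => by simp only [Abar_bal]⟩
    obtain ⟨u, hu, huniq⟩ := hT.lift Λ _ bal
    have e₁ : g.comp (DistribMulAction.toAddMonoidHom T c) = u :=
      huniq _ (fun x y => by
        show g (c • τT x y) = c * Abar x y
        rw [hTL, hg, lemA])
    have e₂ : (AddMonoidHom.mulLeft c).comp g = u :=
      huniq _ (fun x y => by
        show c * g (τT x y) = c * Abar x y
        rw [hg])
    exact congrArg (fun f : T →+ Λ => f z) (e₁.trans e₂.symm)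
  · -- right linearity
    intro c z
    have bal : IsBalancedMap Λ' (fun (x : ∀ i j, NN i j) (c' : Λ') => op c' • x)
        (fun (c' : Λ') (y : ∀ i j, LL i j) => c' • y) (fun x y => Abar x y * c) :=
      ⟨fun m m' x => by simp only [Abar_add_left, add_mul],
       fun m x x' => by simp only [Abar_add_right, add_mul],
       fun a m x => by simp only [Abar_bal]⟩
    obtain ⟨u, hu, huniq⟩ := hT.lift Λ _ bal
    have e₁ : g.comp (DistribMulAction.toAddMonoidHom T (op c)) = u :=
      huniq _ (fun x y => by
        show g (op c • τT x y) = Abar x y * c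
        rw [hTR, hg, lemB])
    have e₂ : (AddMonoidHom.mulRight c).comp g = u :=
      huniq _ (fun x y => by
        show g (τT x y) * c = Abar x y * c
        rw [hg])
    exact congrArg (fun f : T →+ Λ => f z) (e₁.trans e₂.symm)
  · -- surjectivity
    intro hsur
    obtain ⟨Einv, hEs⟩ : ∃ f : (∀ i j, M i j) → Λ, ∀ w, εΛ (f w) = w :=
      ⟨fun w => (hΛ.bijective.2 w).choose, fun w => (hΛ.bijective.2 w).choose_spec⟩
    have Einv_add : ∀ w w', Einv (w + w') = Einv w + Einv w' := fun w w' =>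
      hΛ.bijective.1 (by rw [hΛ.map_add, hEs, hEs, hEs])
    have range_Abar : ∀ x y, Abar x y ∈ g.range := fun x y =>
      AddMonoidHom.mem_range.mpr ⟨τT x y, hg x y⟩
    have key_single : ∀ i k j (u : NN i k) (v : LL k j),
        εΛ (Abar (Pi.single i (Pi.single k u)) (Pi.single k (Pi.single j v)))
          = Pi.single i (Pi.single j (α i k j u v)) := by
      intro i k j u v
      rw [hAbar]
      funext i' j'
      beta_reduce
      by_cases hi : i' = i
      · subst hi
        rw [Pi.single_eq_same, Pi.single_eq_same]
        rw [Finset.sum_eq_single_of_mem k (Finset.mem_univ k)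
          (fun b _ hb => by rw [Pi.single_eq_of_ne hb]; exact α0l _ _ _ _)]
        rw [Pi.single_eq_same, Pi.single_eq_same]
        by_cases hj : j' = j
        · subst hj; rw [Pi.single_eq_same, Pi.single_eq_same]
        · rw [Pi.single_eq_of_ne hj, Pi.single_eq_of_ne hj]
          exact α0r _ _ _ _
      · rw [Pi.single_eq_of_ne hi, Pi.single_eq_of_ne hi]
        simp only [Pi.zero_apply]
        exact Finset.sum_eq_zero fun b _ => α0l _ _ _ _
    have ε0 : εΛ (0 : Λ) = 0 := map_zero (AddMonoidHom.mk' εΛ hΛ.map_add)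
    have εneg : ∀ x : Λ, εΛ (-x) = -εΛ x := fun x =>
      map_neg (AddMonoidHom.mk' εΛ hΛ.map_add) x
    have Einv0 : Einv 0 = 0 := hΛ.bijective.1 (by rw [hEs, ε0])
    have Einv_neg : ∀ w, Einv (-w) = -(Einv w) := fun w =>
      hΛ.bijective.1 (by rw [hEs, εneg, hEs])
    have mem_single : ∀ i j (m : M i j),
        Einv (Pi.single i (Pi.single j m)) ∈ g.range := by
      intro i j m
      by_cases hi : i = t
      · subst i
        have hmem : ∀ r, r ∈ AddSubgroup.closure {r : A t | ∃ nn l, r = mc.zeta nn l} →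
            Einv (Pi.single t (Pi.single j (r • m))) ∈ g.range := by
          intro r hr
          refine AddSubgroup.closure_induction
            (p := fun r _ => Einv (Pi.single t (Pi.single j (r • m))) ∈ g.range)
            ?_ ?_ ?_ ?_ hr
          · beta_reduce
            rintro r ⟨nn, l, rfl⟩
            have hval : α t t j (ce.π t (ctx.δ t 1) nn) (re.lp j l m)
                = mc.zeta nn l • m := by
              rw [hα.spec_t, ← ctx.δ_mul_right, ctx.φ_diag_left, one_mul]
            have heq : Einv (Pi.single t (Pi.single j (mc.zeta nn l • m)))
                = Abar (Pi.single t (Pi.single t (ce.π t (ctx.δ t 1) nn)))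
                  (Pi.single t (Pi.single j (re.lp j l m))) := by
              apply hΛ.bijective.1
              rw [hEs, key_single, hval]
            rw [heq]
            exact range_Abar _ _
          · beta_reduce
            rw [zero_smul, Pi.single_zero, Pi.single_zero, Einv0]
            exact zero_mem _
          · intro a b _ _ ha hb
            beta_reduce
            rw [add_smul, Pi.single_add, Pi.single_add, Einv_add]
            exact add_mem ha hb
          · intro a _ ha
            beta_reduce
            rw [neg_smul, Pi.single_neg, Pi.single_neg, Einv_neg]
            exact neg_mem ha
        have h1 := hmem 1 (by rw [hsur]; trivial)
        rwa [one_smul] at h1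
      · have hval : α i i j (ce.en i i hi (ctx.δ i 1)) (re.el i j hi m) = m := by
          rw [hα.spec_ne i i j hi, ctx.φ_diag_left, one_smul]
        have heq : Einv (Pi.single i (Pi.single j m))
            = Abar (Pi.single i (Pi.single i (ce.en i i hi (ctx.δ i 1))))
              (Pi.single i (Pi.single j (re.el i j hi m))) := by
          apply hΛ.bijective.1
          rw [hEs, key_single, hval]
        rw [heq]
        exact range_Abar _ _
    intro lam
    have pull : ∀ i (w : Fin n → ∀ j', M i j'),
        ∑ j, Pi.single (M := fun i' => ∀ j', M i' j') i (w j)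
          = Pi.single (M := fun i' => ∀ j', M i' j') i (∑ j, w j) := fun i w =>
      (map_sum (AddMonoidHom.single (fun i' => ∀ j', M i' j') i) w Finset.univ).symm
    have hsum : ∑ i, ∑ j, Einv (Pi.single i (Pi.single j (εΛ lam i j))) = lam := by
      apply hΛ.bijective.1
      calc εΛ (∑ i, ∑ j, Einv (Pi.single i (Pi.single j (εΛ lam i j))))
          = ∑ i, ∑ j, εΛ (Einv (Pi.single i (Pi.single j (εΛ lam i j)))) := by
            show AddMonoidHom.mk' εΛ hΛ.map_add _ = _
            rw [map_sum]
            exact Finset.sum_congr rfl fun i _ =>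
              map_sum (AddMonoidHom.mk' εΛ hΛ.map_add) _ _
        _ = ∑ i, ∑ j, Pi.single i (Pi.single j (εΛ lam i j)) :=
            Finset.sum_congr rfl fun i _ => Finset.sum_congr rfl fun j _ => hEs _
        _ = ∑ i, Pi.single i (εΛ lam i) :=
            Finset.sum_congr rfl fun i _ => by
              rw [pull i, Finset.univ_sum_single]
        _ = εΛ lam := Finset.univ_sum_single _
    have hrange : lam ∈ g.range := by
      rw [← hsum]
      exact sum_mem fun i _ => sum_mem fun j _ => mem_single i j _
    exact AddMonoidHom.mem_range.mp hrange
end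

section
/- In the setting of a generalised Morita context (A_i; M_ij; φ_ikj) of size n with A_t = R, a Morita context (R, S; N, L; ζ, θ), their composition (A′_i; M′_ij; φ′_ikj), the column-excision N_m and the row-excision L_m, the row-column ligation |α′| : L_m × N_m → [A′_i; M′_ij] is [A_i; M_ij]-balanced: |α′|(y·c, x) = |α′|(y, c·x) for all y ∈ L_m, x ∈ N_m and c ∈ [A_i; M_ij]. Consequently |α′| factors through an additive map L_m ⊗_{[A_i; M_ij]} N_m → [A′_i; M′_ij]. -/
universe u

open MulOpposite

variable {n : ℕ} {A : Fin n → Type u} {M : Fin n → Fin n → Type u}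
    [∀ i, Ring (A i)] [∀ i j, AddCommGroup (M i j)]
    [∀ i j, Module (A i) (M i j)] [∀ i j, Module ((A j)ᵐᵒᵖ) (M i j)]
    [∀ i j, SMulCommClass (A i) ((A j)ᵐᵒᵖ) (M i j)]

/-!
Entry by entry, `|α'|(y·c, x)` and `|α'|(y, c·x)` are the two bracketings of a triple product
`y·c·x` of generalised matrices, so balancedness reduces to the mixed associativity
`α'_ikj(γ_ihk(y ⊗ c) ⊗ x) = α'_ihj(y ⊗ β_hkj(c ⊗ x))` of the component maps. Both sides are
additive in `y` and in `x`, so it suffices to check it on pure tensors, where all four cases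
(`i = t` or not, `j = t` or not) come down to associativity of `φ`. The factorisation through
`L_m ⊗ N_m` is then the universal property of the tensor product.
-/

theorem IsBTensor.ext_of_map_add {A : Type u} [Ring A] {M X : Type u}
    [AddCommGroup M] [AddCommGroup X]
    {ra : M → A → M} {la : A → X → X} {T : Type u} [AddCommGroup T] {τ : M → X → T}
    (h : IsBTensor A ra la T τ) {Z : Type u} [AddCommGroup Z] {f g : T → Z}
    (hf : ∀ a b, f (a + b) = f a + f b) (hg : ∀ a b, g (a + b) = g a + g b)
    (hfg : ∀ m x, f (τ m x) = g (τ m x)) (z : T) : f z = g z := by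
  obtain ⟨hτ_left, hτ_right, hτ_bal⟩ := h.balanced
  have hbal : IsBalancedMap A ra la (fun m x => f (τ m x)) :=
    ⟨fun m m' x => by simp only [hτ_left, hf], fun m x x' => by simp only [hτ_right, hf],
      fun a m x => by simp only [hτ_bal]⟩
  have hfg' : AddMonoidHom.mk' f hf = AddMonoidHom.mk' g hg :=
    (h.lift Z _ hbal).unique (fun _ _ => rfl) (fun m x => (hfg m x).symm)
  exact DFunLike.congr_fun hfg' z

section GenMatMul

variable {ι : Type*} [Fintype ι] {P Q R : ι → ι → Type*}

def genMatMul [∀ i j, AddCommMonoid (R i j)] (μ : ∀ i k j, P i k → Q k j → R i j)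
    (x : ∀ i j, P i j) (y : ∀ i j, Q i j) : ∀ i j, R i j :=
  fun i j => ∑ k, μ i k j (x i k) (y k j)

theorem genMatMul_add_left [∀ i j, Add (P i j)] [∀ i j, AddCommMonoid (R i j)]
    {μ : ∀ i k j, P i k → Q k j → R i j}
    (hμ : ∀ i k j x x' y, μ i k j (x + x') y = μ i k j x y + μ i k j x' y)
    (x x' : ∀ i j, P i j) (y : ∀ i j, Q i j) :
    genMatMul μ (x + x') y = genMatMul μ x y + genMatMul μ x' y := by
  funext i j
  simp only [genMatMul, Pi.add_apply, hμ, Finset.sum_add_distrib]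

theorem genMatMul_add_right [∀ i j, Add (Q i j)] [∀ i j, AddCommMonoid (R i j)]
    {μ : ∀ i k j, P i k → Q k j → R i j}
    (hμ : ∀ i k j x y y', μ i k j x (y + y') = μ i k j x y + μ i k j x y')
    (x : ∀ i j, P i j) (y y' : ∀ i j, Q i j) :
    genMatMul μ x (y + y') = genMatMul μ x y + genMatMul μ x y' := by
  funext i j
  simp only [genMatMul, Pi.add_apply, hμ, Finset.sum_add_distrib]

theorem genMatMul_assoc [∀ i j, AddCommGroup (P i j)] [∀ i j, AddCommGroup (Q i j)]
    [∀ i j, AddCommGroup (R i j)] {C : ι → ι → Type*}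
    {γ : ∀ i h k, P i h → C h k → P i k} {β : ∀ h k j, C h k → Q k j → Q h j}
    {α : ∀ i k j, P i k → Q k j → R i j}
    (hα_left : ∀ i k j x x' y, α i k j (x + x') y = α i k j x y + α i k j x' y)
    (hα_right : ∀ i k j x y y', α i k j x (y + y') = α i k j x y + α i k j x y')
    (hassoc : ∀ i h k j y c x, α i k j (γ i h k y c) x = α i h j y (β h k j c x))
    (y : ∀ i j, P i j) (c : ∀ i j, C i j) (x : ∀ i j, Q i j) :
    genMatMul α (genMatMul γ y c) x = genMatMul α y (genMatMul β c x) := by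
  funext i j
  calc ∑ k, α i k j (∑ h, γ i h k (y i h) (c h k)) (x k j)
      = ∑ k, ∑ h, α i h j (y i h) (β h k j (c h k) (x k j)) := by
        refine Finset.sum_congr rfl fun k _ =>
          (map_sum (AddMonoidHom.mk' (α i k j · (x k j)) (hα_left i k j · · _)) _ _).trans
          (Finset.sum_congr rfl fun h _ => hassoc ..)
    _ = ∑ h, α i h j (y i h) (∑ k, β h k j (c h k) (x k j)) := by
        rw [Finset.sum_comm]
        exact Finset.sum_congr rfl fun h _ =>
          (map_sum (AddMonoidHom.mk' (α i h j (y i h)) (hα_right i h j _)) _ _).symm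

end GenMatMul

section Ligation

variable {t : Fin n} {S N L : Type u} [Ring S] [AddCommGroup N] [AddCommGroup L]
  [Module (A t) N] [Module Sᵐᵒᵖ N] [SMulCommClass (A t) Sᵐᵒᵖ N]
  [Module S L] [Module ((A t)ᵐᵒᵖ) L] [SMulCommClass S ((A t)ᵐᵒᵖ) L]
  {A' : Fin n → Type u} {M' : Fin n → Fin n → Type u}
  [∀ i, Ring (A' i)] [∀ i j, AddCommGroup (M' i j)]
  [∀ i j, Module (A' i) (M' i j)] [∀ i j, Module ((A' j)ᵐᵒᵖ) (M' i j)]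
  {NN LL : Fin n → Fin n → Type u}
  [∀ i j, AddCommGroup (NN i j)] [∀ i j, AddCommGroup (LL i j)]
  {ctx : GenMoritaCtx n A M} {mc : MoritaCtx (A t) S N L} {cs : CompSetup A M t S N L A' M'}
  {ce : ColExc A M t N NN} {re : RowExc A M t L LL}
  {β : ∀ i k j, M i k → NN k j → NN i j} {γ : ∀ i k j, LL i k → M k j → LL i j}
  {α' : ∀ i k j, LL i k → NN k j → M' i j}

theorem RowColLigation.assoc (hα' : RowColLigation A M t S N L A' M' NN LL ctx mc cs ce re α')
    (hγ : RowExcRight A M t L LL ctx re γ) (hβ : ColExcLeft A M t N NN ctx ce β)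
    (i h k j : Fin n) (y : LL i h) (c : M h k) (x : NN k j) :
    α' i k j (γ i h k y c) x = α' i h j y (β h k j c x) := by
  have hx_add : ∀ i' (y' : LL i' h) (a b : NN k j), α' i' h j y' (β h k j c (a + b)) =
      α' i' h j y' (β h k j c a) + α' i' h j y' (β h k j c b) :=
    fun i' y' a b => by rw [hβ.add_right, hα'.add_right]
  have hy_add : ∀ (a b : LL i h),
      α' i k j (γ i h k (a + b) c) x = α' i k j (γ i h k a c) x + α' i k j (γ i h k b c) x :=
    fun a b => by rw [hγ.add_left, hα'.add_left]
  rcases eq_or_ne t i with rfl | hi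
  · refine (re.lp_tensor h).ext_of_map_add (f := fun y => α' t k j (γ t h k y c) x)
      (g := (α' t h j · (β h k j c x))) hy_add (hα'.add_left t h j · · _) (fun l m => ?_) y
    rcases eq_or_ne t j with rfl | hj
    · refine (ce.π_tensor k).ext_of_map_add (f := α' t k t (γ t h k (re.lp h l m) c))
        (g := (α' t h t (re.lp h l m) <| β h k t c ·)) (hα'.add_right t k t _) (hx_add t _)
        (fun m' nn => ?_) x
      rw [hγ.spec_t, hα'.spec₄, hβ.spec_t, hα'.spec₄, ctx.φ_assoc]
    · obtain ⟨x, rfl⟩ := (ce.en k j hj.symm).surjective x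
      rw [hγ.spec_t, hα'.spec₃ k j hj.symm, hβ.spec_ne h k j hj.symm, hα'.spec₃ h j hj.symm,
        ctx.φ_assoc]
  · obtain ⟨y, rfl⟩ := (re.el i h hi.symm).surjective y
    rcases eq_or_ne t j with rfl | hj
    · refine (ce.π_tensor k).ext_of_map_add (f := α' i k t (γ i h k (re.el i h hi.symm y) c))
        (g := (α' i h t (re.el i h hi.symm y) <| β h k t c ·)) (hα'.add_right i k t _)
        (hx_add i _) (fun m nn => ?_) x
      rw [hγ.spec_ne i h k hi.symm, hα'.spec₂ i k hi.symm, hβ.spec_t, hα'.spec₂ i h hi.symm,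
        ctx.φ_assoc]
    · obtain ⟨x, rfl⟩ := (ce.en k j hj.symm).surjective x
      rw [hγ.spec_ne i h k hi.symm, hα'.spec₁ i k j hi.symm hj.symm, hβ.spec_ne h k j hj.symm,
        hα'.spec₁ i h j hi.symm hj.symm, ctx.φ_assoc]

end Ligation

theorem stmt9_general {n : ℕ} {A : Fin n → Type u} {M : Fin n → Fin n → Type u}
    [∀ i, Ring (A i)] [∀ i j, AddCommGroup (M i j)]
    [∀ i j, Module (A i) (M i j)] [∀ i j, Module ((A j)ᵐᵒᵖ) (M i j)]
    [∀ i j, SMulCommClass (A i) ((A j)ᵐᵒᵖ) (M i j)]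
    (ctx : GenMoritaCtx n A M) (t : Fin n)
    (S N L : Type u) [Ring S] [AddCommGroup N] [AddCommGroup L]
    [Module (A t) N] [Module Sᵐᵒᵖ N] [SMulCommClass (A t) Sᵐᵒᵖ N]
    [Module S L] [Module ((A t)ᵐᵒᵖ) L] [SMulCommClass S ((A t)ᵐᵒᵖ) L]
    (mc : MoritaCtx (A t) S N L)
    (A' : Fin n → Type u) (M' : Fin n → Fin n → Type u)
    [∀ i, Ring (A' i)] [∀ i j, AddCommGroup (M' i j)]
    [∀ i j, Module (A' i) (M' i j)] [∀ i j, Module ((A' j)ᵐᵒᵖ) (M' i j)]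
    [∀ i j, SMulCommClass (A' i) ((A' j)ᵐᵒᵖ) (M' i j)]
    (cs : CompSetup A M t S N L A' M')
    (ctx' : GenMoritaCtx n A' M')
    (Λ : Type u) [Ring Λ] (εΛ : Λ → ∀ i j, M i j)
    (Λ' : Type u) [Ring Λ'] (εΛ' : Λ' → ∀ i j, M' i j) (hΛ' : IsMatrixRing ctx' Λ' εΛ')
    (NN : Fin n → Fin n → Type u) [∀ i j, AddCommGroup (NN i j)]
    (ce : ColExc A M t N NN)
    (LL : Fin n → Fin n → Type u) [∀ i j, AddCommGroup (LL i j)]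
    (re : RowExc A M t L LL)
    -- the [A_i; M_ij]–[A'_i; M'_ij]-bimodule structure on the column-excision N_m
    [Module Λ (∀ i j, NN i j)]
    (β : ∀ i k j, M i k → NN k j → NN i j)
    (hβ : ColExcLeft A M t N NN ctx ce β)
    (hNsmulL : ∀ (c : Λ) (x : ∀ i j, NN i j) (i j : Fin n),
      (c • x) i j = ∑ k, β i k j (εΛ c i k) (x k j))
    -- the [A'_i; M'_ij]–[A_i; M_ij]-bimodule structure on the row-excision L_m
    [Module Λᵐᵒᵖ (∀ i j, LL i j)]
    (γ : ∀ i k j, LL i k → M k j → LL i j)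
    (hγ : RowExcRight A M t L LL ctx re γ)
    (hLsmulR : ∀ (c : Λ) (y : ∀ i j, LL i j) (i j : Fin n),
      (op c • y) i j = ∑ k, γ i k j (y i k) (εΛ c k j))
    -- the row-column ligation and the map |α'| it induces into Λ' = [A'_i; M'_ij]
    (α' : ∀ i k j, LL i k → NN k j → M' i j)
    (hα' : RowColLigation A M t S N L A' M' NN LL ctx mc cs ce re α')
    (Abar' : (∀ i j, LL i j) → (∀ i j, NN i j) → Λ')
    (hAbar' : ∀ y x, εΛ' (Abar' y x) = fun i j => ∑ k, α' i k j (y i k) (x k j)) :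
    (∀ (y : ∀ i j, LL i j) (x : ∀ i j, NN i j) (c : Λ),
      Abar' (op c • y) x = Abar' y (c • x)) ∧
    (∀ (T : Type u) [AddCommGroup T]
        (τT : (∀ i j, LL i j) → (∀ i j, NN i j) → T),
      IsBTensor Λ (fun (y : ∀ i j, LL i j) (c : Λ) => op c • y)
          (fun (c : Λ) (x : ∀ i j, NN i j) => c • x) T τT →
      ∃ g : T →+ Λ', ∀ y x, g (τT y x) = Abar' y x) := by
  have hAbar'_add_left (y y' x) : Abar' (y + y') x = Abar' y x + Abar' y' x :=
    hΛ'.bijective.1 <| by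
      rw [hΛ'.map_add, hAbar', hAbar', hAbar']
      exact genMatMul_add_left hα'.add_left y y' x
  have hAbar'_add_right (y x x') : Abar' y (x + x') = Abar' y x + Abar' y x' :=
    hΛ'.bijective.1 <| by
      rw [hΛ'.map_add, hAbar', hAbar', hAbar']
      exact genMatMul_add_right hα'.add_right y x x'
  have hAbar'_balanced (y x) (c : Λ) : Abar' (op c • y) x = Abar' y (c • x) :=
    hΛ'.bijective.1 <| by
      have hy : op c • y = genMatMul γ y (εΛ c) := funext₂ (hLsmulR c y)
      have hx : c • x = genMatMul β (εΛ c) x := funext₂ (hNsmulL c x)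
      rw [hAbar', hAbar', hy, hx]
      exact genMatMul_assoc hα'.add_left hα'.add_right (hα'.assoc hγ hβ) y (εΛ c) x
  refine ⟨hAbar'_balanced, fun T _ τT hT => ?_⟩
  obtain ⟨g, hg, -⟩ := hT.lift Λ' Abar'
    ⟨hAbar'_add_left, hAbar'_add_right, fun c y x => hAbar'_balanced y x c⟩
  exact ⟨g, hg⟩

/-- the row-column ligation `|α'| : L_m × N_m → [A'_i; M'_ij]` is
`[A_i; M_ij]`-balanced, i.e. `|α'|(y·c, x) = |α'|(y, c·x)`; consequently it
factors through an additive map `L_m ⊗_{[A_i; M_ij]} N_m → [A'_i; M'_ij]`. -/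
theorem stmt9 {n : ℕ} {A : Fin n → Type u} {M : Fin n → Fin n → Type u}
    [∀ i, Ring (A i)] [∀ i j, AddCommGroup (M i j)]
    [∀ i j, Module (A i) (M i j)] [∀ i j, Module ((A j)ᵐᵒᵖ) (M i j)]
    [∀ i j, SMulCommClass (A i) ((A j)ᵐᵒᵖ) (M i j)]
    (ctx : GenMoritaCtx n A M) (t : Fin n)
    (S N L : Type u) [Ring S] [AddCommGroup N] [AddCommGroup L]
    [Module (A t) N] [Module Sᵐᵒᵖ N] [SMulCommClass (A t) Sᵐᵒᵖ N]
    [Module S L] [Module ((A t)ᵐᵒᵖ) L] [SMulCommClass S ((A t)ᵐᵒᵖ) L]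
    (mc : MoritaCtx (A t) S N L)
    (A' : Fin n → Type u) (M' : Fin n → Fin n → Type u)
    [∀ i, Ring (A' i)] [∀ i j, AddCommGroup (M' i j)]
    [∀ i j, Module (A' i) (M' i j)] [∀ i j, Module ((A' j)ᵐᵒᵖ) (M' i j)]
    [∀ i j, SMulCommClass (A' i) ((A' j)ᵐᵒᵖ) (M' i j)]
    (cs : CompSetup A M t S N L A' M')
    (ctx' : GenMoritaCtx n A' M')
    (hcomp : IsComposition A M t S N L A' M' ctx mc cs ctx')
    (Λ : Type u) [Ring Λ] (εΛ : Λ → ∀ i j, M i j) (hΛ : IsMatrixRing ctx Λ εΛ)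
    (Λ' : Type u) [Ring Λ'] (εΛ' : Λ' → ∀ i j, M' i j) (hΛ' : IsMatrixRing ctx' Λ' εΛ')
    (NN : Fin n → Fin n → Type u) [∀ i j, AddCommGroup (NN i j)]
    (ce : ColExc A M t N NN)
    (LL : Fin n → Fin n → Type u) [∀ i j, AddCommGroup (LL i j)]
    (re : RowExc A M t L LL)
    -- the [A_i; M_ij]–[A'_i; M'_ij]-bimodule structure on the column-excision N_m
    [Module Λ (∀ i j, NN i j)] [Module Λ'ᵐᵒᵖ (∀ i j, NN i j)]
    [SMulCommClass Λ Λ'ᵐᵒᵖ (∀ i j, NN i j)]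
    (β : ∀ i k j, M i k → NN k j → NN i j)
    (hβ : ColExcLeft A M t N NN ctx ce β)
    (β' : ∀ i k j, NN i k → M' k j → NN i j)
    (hβ' : ColExcRight A M t S N L A' M' NN ctx mc cs ce β')
    (hNsmulL : ∀ (c : Λ) (x : ∀ i j, NN i j) (i j : Fin n),
      (c • x) i j = ∑ k, β i k j (εΛ c i k) (x k j))
    (hNsmulR : ∀ (c' : Λ') (x : ∀ i j, NN i j) (i j : Fin n),
      (op c' • x) i j = ∑ k, β' i k j (x i k) (εΛ' c' k j))
    -- the [A'_i; M'_ij]–[A_i; M_ij]-bimodule structure on the row-excision L_m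
    [Module Λ' (∀ i j, LL i j)] [Module Λᵐᵒᵖ (∀ i j, LL i j)]
    [SMulCommClass Λ' Λᵐᵒᵖ (∀ i j, LL i j)]
    (γ' : ∀ i k j, M' i k → LL k j → LL i j)
    (hγ' : RowExcLeft A M t S N L A' M' LL ctx mc cs re γ')
    (γ : ∀ i k j, LL i k → M k j → LL i j)
    (hγ : RowExcRight A M t L LL ctx re γ)
    (hLsmulL : ∀ (c' : Λ') (y : ∀ i j, LL i j) (i j : Fin n),
      (c' • y) i j = ∑ k, γ' i k j (εΛ' c' i k) (y k j))
    (hLsmulR : ∀ (c : Λ) (y : ∀ i j, LL i j) (i j : Fin n),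
      (op c • y) i j = ∑ k, γ i k j (y i k) (εΛ c k j))
    -- the row-column ligation and the map |α'| it induces into Λ' = [A'_i; M'_ij]
    (α' : ∀ i k j, LL i k → NN k j → M' i j)
    (hα' : RowColLigation A M t S N L A' M' NN LL ctx mc cs ce re α')
    (Abar' : (∀ i j, LL i j) → (∀ i j, NN i j) → Λ')
    (hAbar' : ∀ y x, εΛ' (Abar' y x) = fun i j => ∑ k, α' i k j (y i k) (x k j)) :
    (∀ (y : ∀ i j, LL i j) (x : ∀ i j, NN i j) (c : Λ),
      Abar' (op c • y) x = Abar' y (c • x)) ∧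
    (∀ (T : Type u) [AddCommGroup T]
        (τT : (∀ i j, LL i j) → (∀ i j, NN i j) → T),
      IsBTensor Λ (fun (y : ∀ i j, LL i j) (c : Λ) => op c • y)
          (fun (c : Λ) (x : ∀ i j, NN i j) => c • x) T τT →
      ∃ g : T →+ Λ', ∀ y x, g (τT y x) = Abar' y x) :=
  stmt9_general ctx t S N L mc A' M' cs ctx' Λ εΛ Λ' εΛ' hΛ' NN ce LL re β hβ hNsmulL γ hγ hLsmulR
    α' hα' Abar' hAbar'
end

section
/- In the setting of a generalised Morita context (A_i; M_ij; φ_ikj) of size n with A_t = R, a Morita context (R, S; N, L; ζ, θ), their composition (A′_i; M′_ij; φ′_ikj), the column-excision N_m and the row-excision L_m, the additive map |α′| : L_m ⊗_{[A_i; M_ij]} N_m → [A′_i; M′_ij] induced by the row-column ligation is a homomorphism of [A′_i; M′_ij]–[A′_i; M′_ij]-bimodules. Moreover, if θ : L ⊗_R N → S is surjective, then |α′| is surjective. -/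
universe u

open MulOpposite

variable {n : ℕ} {A : Fin n → Type u} {M : Fin n → Fin n → Type u}
    [∀ i, Ring (A i)] [∀ i j, AddCommGroup (M i j)]
    [∀ i j, Module (A i) (M i j)] [∀ i j, Module ((A j)ᵐᵒᵖ) (M i j)]
    [∀ i j, SMulCommClass (A i) ((A j)ᵐᵒᵖ) (M i j)]

/-! ### Auxiliary lemmas -/

lemma gen_top {A₀ : Type u} [Ring A₀] {M₀ X₀ : Type u} [AddCommGroup M₀] [AddCommGroup X₀]
    {ra : M₀ → A₀ → M₀} {la : A₀ → X₀ → X₀} {T₀ : Type u} [AddCommGroup T₀] {τ : M₀ → X₀ → T₀}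
    (h : IsBTensor A₀ ra la T₀ τ) :
    AddSubgroup.closure {z : T₀ | ∃ m x, z = τ m x} = ⊤ := by
  set H := AddSubgroup.closure {z : T₀ | ∃ m x, z = τ m x} with hH
  have hb : IsBalancedMap A₀ ra la
      (fun m x => (⟨τ m x, AddSubgroup.subset_closure ⟨m, x, rfl⟩⟩ : H)) := by
    refine ⟨fun m m' x => ?_, fun m x x' => ?_, fun a m x => ?_⟩ <;>
      exact Subtype.ext (by simp [h.balanced.1, h.balanced.2.1, h.balanced.2.2])
  obtain ⟨φh, hφ, -⟩ := h.lift H _ hb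
  obtain ⟨u, -, huniq⟩ := h.lift T₀ τ h.balanced
  have h1 : H.subtype.comp φh = u := huniq _ (fun m x => by simp [hφ])
  have h2 : AddMonoidHom.id T₀ = u := huniq _ (fun m x => rfl)
  rw [eq_top_iff]
  intro z _
  have h3 : H.subtype.comp φh z = z := by rw [h1, ← h2]; rfl
  rw [← h3]
  exact (φh z).2

lemma eq_of_closure {T₀ Z₀ : Type u} [AddCommGroup T₀] [AddCommGroup Z₀] {s : Set T₀}
    (hs : AddSubgroup.closure s = ⊤) (f g : T₀ → Z₀)
    (hf : ∀ a b, f (a + b) = f a + f b) (hg : ∀ a b, g (a + b) = g a + g b)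
    (h : ∀ x ∈ s, f x = g x) : ∀ z, f z = g z := by
  intro z
  have hz : z ∈ AddSubgroup.closure s := by rw [hs]; trivial
  induction hz using AddSubgroup.closure_induction with
  | mem x hx => exact h x hx
  | zero =>
      rw [show f 0 = 0 from map_zero (AddMonoidHom.mk' f hf),
        show g 0 = 0 from map_zero (AddMonoidHom.mk' g hg)]
  | add x y _ _ ihx ihy => rw [hf, hg, ihx, ihy]
  | neg x _ ih =>
      rw [show f (-x) = - f x from map_neg (AddMonoidHom.mk' f hf) x,
        show g (-x) = - g x from map_neg (AddMonoidHom.mk' g hg) x, ih]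

lemma mem_of_closure {T₀ Z₀ : Type u} [AddCommGroup T₀] [AddCommGroup Z₀] {s : Set T₀}
    (hs : AddSubgroup.closure s = ⊤) (f : T₀ → Z₀)
    (hf : ∀ a b, f (a + b) = f a + f b)
    (G : AddSubgroup Z₀) (h : ∀ x ∈ s, f x ∈ G) : ∀ z, f z ∈ G := by
  intro z
  have hz : z ∈ AddSubgroup.closure s := by rw [hs]; trivial
  induction hz using AddSubgroup.closure_induction with
  | mem x hx => exact h x hx
  | zero => rw [show f 0 = 0 from map_zero (AddMonoidHom.mk' f hf)]; exact G.zero_mem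
  | add x y _ _ ihx ihy => rw [hf]; exact G.add_mem ihx ihy
  | neg x _ ih =>
      rw [show f (-x) = - f x from map_neg (AddMonoidHom.mk' f hf) x]; exact G.neg_mem ih
section Key

variable (t : Fin n) (S N L : Type u) [Ring S]
  [AddCommGroup N] [AddCommGroup L]
  [Module (A t) N] [Module Sᵐᵒᵖ N] [SMulCommClass (A t) Sᵐᵒᵖ N]
  [Module S L] [Module ((A t)ᵐᵒᵖ) L] [SMulCommClass S ((A t)ᵐᵒᵖ) L]
  (A' : Fin n → Type u) (M' : Fin n → Fin n → Type u)
  [∀ i, Ring (A' i)] [∀ i j, AddCommGroup (M' i j)]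
  [∀ i j, Module (A' i) (M' i j)] [∀ i j, Module ((A' j)ᵐᵒᵖ) (M' i j)]
  [∀ i j, SMulCommClass (A' i) ((A' j)ᵐᵒᵖ) (M' i j)]
  (NN : Fin n → Fin n → Type u) [∀ i j, AddCommGroup (NN i j)]
  (LL : Fin n → Fin n → Type u) [∀ i j, AddCommGroup (LL i j)]

lemma keyL (ctx : GenMoritaCtx n A M) (mc : MoritaCtx (A t) S N L)
    (cs : CompSetup A M t S N L A' M') (ctx' : GenMoritaCtx n A' M')
    (hcomp : IsComposition A M t S N L A' M' ctx mc cs ctx')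
    (ce : ColExc A M t N NN) (re : RowExc A M t L LL)
    (α' : ∀ i k j, LL i k → NN k j → M' i j)
    (hα' : RowColLigation A M t S N L A' M' NN LL ctx mc cs ce re α')
    (γ' : ∀ i k j, M' i k → LL k j → LL i j)
    (hγ' : RowExcLeft A M t S N L A' M' LL ctx mc cs re γ')
    (i h k j : Fin n) (m' : M' i h) (yL : LL h k) (xN : NN k j) :
    ctx'.φ i h j m' (α' h k j yL xN) = α' i k j (γ' i h k m' yL) xN := by
  rcases eq_or_ne t h with rfl | hh'
  · rcases eq_or_ne t i with rfl | hi'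
    · -- i = t, h = t
      obtain ⟨s, rfl⟩ := cs.uS.surjective m'
      rcases eq_or_ne t j with rfl | hj'
      · -- (t,t,t)
        refine eq_of_closure (gen_top (re.lp_tensor k))
          (fun v => ctx'.φ t t t (cs.uS s) (α' t k t v xN))
          (fun v => α' t k t (γ' t t k (cs.uS s) v) xN)
          (fun a b => by rw [hα'.add_left, ctx'.φ_add_right])
          (fun a b => by rw [hγ'.add_right, hα'.add_left]) ?_ yL
        rintro _ ⟨l, mm, rfl⟩
        refine eq_of_closure (gen_top (ce.π_tensor k))
          (fun v => ctx'.φ t t t (cs.uS s) (α' t k t (re.lp k l mm) v))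
          (fun v => α' t k t (γ' t t k (cs.uS s) (re.lp k l mm)) v)
          (fun a b => by rw [hα'.add_right, ctx'.φ_add_right])
          (fun a b => by rw [hα'.add_right]) ?_ xN
        rintro _ ⟨mm', nn, rfl⟩
        try dsimp only
        rw [hα'.spec₄ k l mm mm' nn, hcomp.phi_ttt, hγ'.spec₄ k s l mm,
          hα'.spec₄ k (s • l) mm mm' nn, ← mc.theta_left,
          smul_comm s (op ((ctx.δ t).symm (ctx.φ t k t mm mm'))) l]
      · -- (t,t,j≠t)
        have hj : j ≠ t := hj'.symm
        obtain ⟨w, rfl⟩ := (ce.en k j hj).surjective xN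
        refine eq_of_closure (gen_top (re.lp_tensor k))
          (fun v => ctx'.φ t t j (cs.uS s) (α' t k j v (ce.en k j hj w)))
          (fun v => α' t k j (γ' t t k (cs.uS s) v) (ce.en k j hj w))
          (fun a b => by rw [hα'.add_left, ctx'.φ_add_right])
          (fun a b => by rw [hγ'.add_right, hα'.add_left]) ?_ yL
        rintro _ ⟨l, mm, rfl⟩
        try dsimp only
        rw [hα'.spec₃ k j hj l mm w, hcomp.phi_ttj j hj s l (ctx.φ t k j mm w),
          hγ'.spec₄ k s l mm, hα'.spec₃ k j hj (s • l) mm w]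
    · -- i ≠ t, h = t
      have hi : i ≠ t := hi'.symm
      rcases eq_or_ne t j with rfl | hj'
      · -- (i≠,t,t)
        refine eq_of_closure (gen_top (cs.tmulN_tensor i hi))
          (fun v => ctx'.φ i t t v (α' t k t yL xN))
          (fun v => α' i k t (γ' i t k v yL) xN)
          (fun a b => by rw [ctx'.φ_add_left])
          (fun a b => by rw [hγ'.add_left, hα'.add_left]) ?_ m'
        rintro _ ⟨m, nn, rfl⟩
        refine eq_of_closure (gen_top (re.lp_tensor k))
          (fun v => ctx'.φ i t t (cs.tmulN i hi m nn) (α' t k t v xN))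
          (fun v => α' i k t (γ' i t k (cs.tmulN i hi m nn) v) xN)
          (fun a b => by rw [hα'.add_left, ctx'.φ_add_right])
          (fun a b => by rw [hγ'.add_right, hα'.add_left]) ?_ yL
        rintro _ ⟨l, mm, rfl⟩
        refine eq_of_closure (gen_top (ce.π_tensor k))
          (fun v => ctx'.φ i t t (cs.tmulN i hi m nn) (α' t k t (re.lp k l mm) v))
          (fun v => α' i k t (γ' i t k (cs.tmulN i hi m nn) (re.lp k l mm)) v)
          (fun a b => by rw [hα'.add_right, ctx'.φ_add_right])
          (fun a b => by rw [hα'.add_right]) ?_ xN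
        rintro _ ⟨mm', nn', rfl⟩
        have hbal := (cs.tmulN_tensor i hi).balanced.2.2
        obtain ⟨b, hb⟩ := (ctx.δ t).surjective (ctx.φ t k t mm mm')
        try dsimp only
        rw [hα'.spec₄ k l mm mm' nn', hcomp.phi_itt i hi m nn,
          hγ'.spec₃ i k hi m nn l mm,
          hα'.spec₂ i k hi (ctx.φ i t k (op (mc.zeta nn l) • m) mm) mm' nn',
          ← hb, AddEquiv.symm_apply_apply,
          ctx.φ_balanced i t k (mc.zeta nn l) m mm,
          ← ctx.φ_assoc i t k t m (mc.zeta nn l • mm) mm',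
          ctx.φ_smul_left t k t (mc.zeta nn l) mm mm',
          ← hb, ← ctx.δ_mul_left t (mc.zeta nn l) b,
          ctx.φ_diag_right i t (mc.zeta nn l * b) m,
          hbal (mc.zeta nn l * b) m nn',
          ← mc.assoc_left nn (op b • l) nn', mc.zeta_right b nn l]
      · -- (i≠,t,j≠)
        have hj : j ≠ t := hj'.symm
        obtain ⟨w, rfl⟩ := (ce.en k j hj).surjective xN
        refine eq_of_closure (gen_top (cs.tmulN_tensor i hi))
          (fun v => ctx'.φ i t j v (α' t k j yL (ce.en k j hj w)))
          (fun v => α' i k j (γ' i t k v yL) (ce.en k j hj w))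
          (fun a b => by rw [ctx'.φ_add_left])
          (fun a b => by rw [hγ'.add_left, hα'.add_left]) ?_ m'
        rintro _ ⟨m, nn, rfl⟩
        refine eq_of_closure (gen_top (re.lp_tensor k))
          (fun v => ctx'.φ i t j (cs.tmulN i hi m nn) (α' t k j v (ce.en k j hj w)))
          (fun v => α' i k j (γ' i t k (cs.tmulN i hi m nn) v) (ce.en k j hj w))
          (fun a b => by rw [hα'.add_left, ctx'.φ_add_right])
          (fun a b => by rw [hγ'.add_right, hα'.add_left]) ?_ yL
        rintro _ ⟨l, mm, rfl⟩
        try dsimp only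
        rw [hα'.spec₃ k j hj l mm w, hcomp.phi_itj i j hi hj m nn l (ctx.φ t k j mm w),
          hγ'.spec₃ i k hi m nn l mm,
          hα'.spec₁ i k j hi hj (ctx.φ i t k (op (mc.zeta nn l) • m) mm) w,
          ctx.φ_assoc i t k j (op (mc.zeta nn l) • m) mm w]
  · have hh : h ≠ t := hh'.symm
    rcases eq_or_ne t i with rfl | hi'
    · -- i = t, h ≠ t
      obtain ⟨y, rfl⟩ := (re.el h k hh).surjective yL
      rcases eq_or_ne t j with rfl | hj'
      · -- (t,h≠,t)
        refine eq_of_closure (gen_top (cs.tmulL_tensor h hh))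
          (fun v => ctx'.φ t h t v (α' h k t (re.el h k hh y) xN))
          (fun v => α' t k t (γ' t h k v (re.el h k hh y)) xN)
          (fun a b => by rw [ctx'.φ_add_left])
          (fun a b => by rw [hγ'.add_left, hα'.add_left]) ?_ m'
        rintro _ ⟨l, m, rfl⟩
        refine eq_of_closure (gen_top (ce.π_tensor k))
          (fun v => ctx'.φ t h t (cs.tmulL h hh l m) (α' h k t (re.el h k hh y) v))
          (fun v => α' t k t (γ' t h k (cs.tmulL h hh l m) (re.el h k hh y)) v)
          (fun a b => by rw [hα'.add_right, ctx'.φ_add_right])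
          (fun a b => by rw [hα'.add_right]) ?_ xN
        rintro _ ⟨mm, nn, rfl⟩
        try dsimp only
        rw [hα'.spec₂ h k hh y mm nn, hcomp.phi_tkt h hh l m (ctx.φ h k t y mm) nn,
          hγ'.spec₂ h k hh l m y, hα'.spec₄ k l (ctx.φ t h k m y) mm nn,
          ctx.φ_assoc t h k t m y mm]
      · -- (t,h≠,j≠)
        have hj : j ≠ t := hj'.symm
        obtain ⟨w, rfl⟩ := (ce.en k j hj).surjective xN
        refine eq_of_closure (gen_top (cs.tmulL_tensor h hh))
          (fun v => ctx'.φ t h j v (α' h k j (re.el h k hh y) (ce.en k j hj w)))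
          (fun v => α' t k j (γ' t h k v (re.el h k hh y)) (ce.en k j hj w))
          (fun a b => by rw [ctx'.φ_add_left])
          (fun a b => by rw [hγ'.add_left, hα'.add_left]) ?_ m'
        rintro _ ⟨l, m, rfl⟩
        try dsimp only
        rw [hα'.spec₁ h k j hh hj y w, hcomp.phi_tkj h j hh hj l m (ctx.φ h k j y w),
          hγ'.spec₂ h k hh l m y, hα'.spec₃ k j hj l (ctx.φ t h k m y) w,
          ctx.φ_assoc t h k j m y w]
    · -- i ≠ t, h ≠ t
      have hi : i ≠ t := hi'.symm
      obtain ⟨x, rfl⟩ := (cs.ee i h hi hh).surjective m'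
      obtain ⟨y, rfl⟩ := (re.el h k hh).surjective yL
      rcases eq_or_ne t j with rfl | hj'
      · -- (i≠,h≠,t)
        refine eq_of_closure (gen_top (ce.π_tensor k))
          (fun v => ctx'.φ i h t (cs.ee i h hi hh x) (α' h k t (re.el h k hh y) v))
          (fun v => α' i k t (γ' i h k (cs.ee i h hi hh x) (re.el h k hh y)) v)
          (fun a b => by rw [hα'.add_right, ctx'.φ_add_right])
          (fun a b => by rw [hα'.add_right]) ?_ xN
        rintro _ ⟨m, nn, rfl⟩
        try dsimp only
        rw [hα'.spec₂ h k hh y m nn, hcomp.phi_ikt i h hi hh x (ctx.φ h k t y m) nn,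
          hγ'.spec₁ i h k hi hh x y, hα'.spec₂ i k hi (ctx.φ i h k x y) m nn,
          ctx.φ_assoc i h k t x y m]
      · -- (i≠,h≠,j≠)
        have hj : j ≠ t := hj'.symm
        obtain ⟨w, rfl⟩ := (ce.en k j hj).surjective xN
        try dsimp only
        rw [hα'.spec₁ h k j hh hj y w, hcomp.phi_ikj i h j hi hh hj x (ctx.φ h k j y w),
          hγ'.spec₁ i h k hi hh x y, hα'.spec₁ i k j hi hj (ctx.φ i h k x y) w,
          ctx.φ_assoc i h k j x y w]

lemma keyR (ctx : GenMoritaCtx n A M) (mc : MoritaCtx (A t) S N L)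
    (cs : CompSetup A M t S N L A' M') (ctx' : GenMoritaCtx n A' M')
    (hcomp : IsComposition A M t S N L A' M' ctx mc cs ctx')
    (ce : ColExc A M t N NN) (re : RowExc A M t L LL)
    (α' : ∀ i k j, LL i k → NN k j → M' i j)
    (hα' : RowColLigation A M t S N L A' M' NN LL ctx mc cs ce re α')
    (β' : ∀ i k j, NN i k → M' k j → NN i j)
    (hβ' : ColExcRight A M t S N L A' M' NN ctx mc cs ce β')
    (i k h j : Fin n) (yL : LL i k) (xN : NN k h) (m' : M' h j) :
    ctx'.φ i h j (α' i k h yL xN) m' = α' i k j yL (β' k h j xN m') := by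
  rcases eq_or_ne t i with rfl | hi'
  · -- i = t : induct on yL throughout
    rcases eq_or_ne t h with rfl | hh'
    · -- i = t, h = t
      rcases eq_or_ne t j with rfl | hj'
      · -- (t,t,t) : m' = uS s
        obtain ⟨s, rfl⟩ := cs.uS.surjective m'
        refine eq_of_closure (gen_top (re.lp_tensor k))
          (fun v => ctx'.φ t t t (α' t k t v xN) (cs.uS s))
          (fun v => α' t k t v (β' k t t xN (cs.uS s)))
          (fun a b => by try dsimp only
                         rw [hα'.add_left, ctx'.φ_add_left])
          (fun a b => by try dsimp only
                         rw [hα'.add_left]) ?_ yL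
        rintro _ ⟨l, m, rfl⟩
        refine eq_of_closure (gen_top (ce.π_tensor k))
          (fun v => ctx'.φ t t t (α' t k t (re.lp k l m) v) (cs.uS s))
          (fun v => α' t k t (re.lp k l m) (β' k t t v (cs.uS s)))
          (fun a b => by try dsimp only
                         rw [hα'.add_right, ctx'.φ_add_left])
          (fun a b => by try dsimp only
                         rw [hβ'.add_left, hα'.add_right]) ?_ xN
        rintro _ ⟨mm, nn, rfl⟩
        try dsimp only
        rw [hα'.spec₄ k l m mm nn, hcomp.phi_ttt _ s, hβ'.spec₄ k mm nn s,
          hα'.spec₄ k l m mm (op s • nn),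
          mc.theta_right s (op ((ctx.δ t).symm (ctx.φ t k t m mm)) • l) nn]
      · -- (t,t,j≠) : m' tmulL-ind, yL lp-ind, xN π-ind
        have hj : j ≠ t := hj'.symm
        refine eq_of_closure (gen_top (re.lp_tensor k))
          (fun v => ctx'.φ t t j (α' t k t v xN) m')
          (fun v => α' t k j v (β' k t j xN m'))
          (fun a b => by try dsimp only
                         rw [hα'.add_left, ctx'.φ_add_left])
          (fun a b => by try dsimp only
                         rw [hα'.add_left]) ?_ yL
        rintro _ ⟨l, m, rfl⟩
        refine eq_of_closure (gen_top (ce.π_tensor k))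
          (fun v => ctx'.φ t t j (α' t k t (re.lp k l m) v) m')
          (fun v => α' t k j (re.lp k l m) (β' k t j v m'))
          (fun a b => by try dsimp only
                         rw [hα'.add_right, ctx'.φ_add_left])
          (fun a b => by try dsimp only
                         rw [hβ'.add_left, hα'.add_right]) ?_ xN
        rintro _ ⟨mm, nn, rfl⟩
        refine eq_of_closure (gen_top (cs.tmulL_tensor j hj))
          (fun v => ctx'.φ t t j (α' t k t (re.lp k l m) (ce.π k mm nn)) v)
          (fun v => α' t k j (re.lp k l m) (β' k t j (ce.π k mm nn) v))
          (fun a b => by try dsimp only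
                         rw [ctx'.φ_add_right])
          (fun a b => by try dsimp only
                         rw [hβ'.add_right, hα'.add_right]) ?_ m'
        rintro _ ⟨l', m2, rfl⟩
        have hbalL := (cs.tmulL_tensor j hj).balanced.2.2
        obtain ⟨b, hb⟩ := (ctx.δ t).surjective (ctx.φ t k t m mm)
        try dsimp only
        rw [hα'.spec₄ k l m mm nn, hcomp.phi_ttj j hj _ l' m2,
          hβ'.spec₃ k j hj mm nn l' m2,
          hα'.spec₃ k j hj l m (ctx.φ k t j (op (mc.zeta nn l') • mm) m2),
          ← hb, AddEquiv.symm_apply_apply,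
          mc.assoc_right (op b • l) nn l', smul_smul, ← MulOpposite.op_mul,
          ctx.φ_balanced k t j (mc.zeta nn l') mm m2,
          ctx.φ_assoc t k t j m mm (mc.zeta nn l' • m2),
          ← hb, ctx.φ_diag_left t j b (mc.zeta nn l' • m2),
          ← mul_smul b (mc.zeta nn l') m2,
          ← hbalL (b * mc.zeta nn l') l m2]
    · -- i = t, h ≠ t
      have hh : h ≠ t := hh'.symm
      obtain ⟨x, rfl⟩ := (ce.en k h hh).surjective xN
      rcases eq_or_ne t j with rfl | hj'
      · -- (t,h≠,t) : yL lp-ind, m' tmulN-ind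
        refine eq_of_closure (gen_top (re.lp_tensor k))
          (fun v => ctx'.φ t h t (α' t k h v (ce.en k h hh x)) m')
          (fun v => α' t k t v (β' k h t (ce.en k h hh x) m'))
          (fun a b => by try dsimp only
                         rw [hα'.add_left, ctx'.φ_add_left])
          (fun a b => by try dsimp only
                         rw [hα'.add_left]) ?_ yL
        rintro _ ⟨l, m, rfl⟩
        refine eq_of_closure (gen_top (cs.tmulN_tensor h hh))
          (fun v => ctx'.φ t h t (α' t k h (re.lp k l m) (ce.en k h hh x)) v)
          (fun v => α' t k t (re.lp k l m) (β' k h t (ce.en k h hh x) v))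
          (fun a b => by try dsimp only
                         rw [ctx'.φ_add_right])
          (fun a b => by try dsimp only
                         rw [hβ'.add_right, hα'.add_right]) ?_ m'
        rintro _ ⟨mm, nn, rfl⟩
        try dsimp only
        rw [hα'.spec₃ k h hh l m x, hcomp.phi_tkt h hh l (ctx.φ t k h m x) mm nn,
          hβ'.spec₂ k h hh x mm nn, hα'.spec₄ k l m (ctx.φ k h t x mm) nn,
          ctx.φ_assoc t k h t m x mm]
      · -- (t,h≠,j≠) : yL lp-ind, m' = ee direct
        have hj : j ≠ t := hj'.symm
        obtain ⟨z, rfl⟩ := (cs.ee h j hh hj).surjective m'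
        refine eq_of_closure (gen_top (re.lp_tensor k))
          (fun v => ctx'.φ t h j (α' t k h v (ce.en k h hh x)) (cs.ee h j hh hj z))
          (fun v => α' t k j v (β' k h j (ce.en k h hh x) (cs.ee h j hh hj z)))
          (fun a b => by try dsimp only
                         rw [hα'.add_left, ctx'.φ_add_left])
          (fun a b => by try dsimp only
                         rw [hα'.add_left]) ?_ yL
        rintro _ ⟨l, m, rfl⟩
        try dsimp only
        rw [hα'.spec₃ k h hh l m x, hcomp.phi_tkj h j hh hj l (ctx.φ t k h m x) z,
          hβ'.spec₁ k h j hh hj x z, hα'.spec₃ k j hj l m (ctx.φ k h j x z),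
          ctx.φ_assoc t k h j m x z]
  · -- i ≠ t
    have hi : i ≠ t := hi'.symm
    obtain ⟨y, rfl⟩ := (re.el i k hi).surjective yL
    rcases eq_or_ne t h with rfl | hh'
    · -- i ≠ t, h = t : xN π-ind
      rcases eq_or_ne t j with rfl | hj'
      · -- (i≠,t,t) : m' = uS s
        obtain ⟨s, rfl⟩ := cs.uS.surjective m'
        refine eq_of_closure (gen_top (ce.π_tensor k))
          (fun v => ctx'.φ i t t (α' i k t (re.el i k hi y) v) (cs.uS s))
          (fun v => α' i k t (re.el i k hi y) (β' k t t v (cs.uS s)))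
          (fun a b => by try dsimp only
                         rw [hα'.add_right, ctx'.φ_add_left])
          (fun a b => by try dsimp only
                         rw [hβ'.add_left, hα'.add_right]) ?_ xN
        rintro _ ⟨mm, nn, rfl⟩
        try dsimp only
        rw [hα'.spec₂ i k hi y mm nn, hcomp.phi_itt i hi (ctx.φ i k t y mm) nn s,
          hβ'.spec₄ k mm nn s, hα'.spec₂ i k hi y mm (op s • nn)]
      · -- (i≠,t,j≠) : xN π-ind, m' tmulL-ind
        have hj : j ≠ t := hj'.symm
        refine eq_of_closure (gen_top (ce.π_tensor k))
          (fun v => ctx'.φ i t j (α' i k t (re.el i k hi y) v) m')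
          (fun v => α' i k j (re.el i k hi y) (β' k t j v m'))
          (fun a b => by try dsimp only
                         rw [hα'.add_right, ctx'.φ_add_left])
          (fun a b => by try dsimp only
                         rw [hβ'.add_left, hα'.add_right]) ?_ xN
        rintro _ ⟨mm, nn, rfl⟩
        refine eq_of_closure (gen_top (cs.tmulL_tensor j hj))
          (fun v => ctx'.φ i t j (α' i k t (re.el i k hi y) (ce.π k mm nn)) v)
          (fun v => α' i k j (re.el i k hi y) (β' k t j (ce.π k mm nn) v))
          (fun a b => by try dsimp only
                         rw [ctx'.φ_add_right])
          (fun a b => by try dsimp only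
                         rw [hβ'.add_right, hα'.add_right]) ?_ m'
        rintro _ ⟨l, m2, rfl⟩
        try dsimp only
        rw [hα'.spec₂ i k hi y mm nn,
          hcomp.phi_itj i j hi hj (ctx.φ i k t y mm) nn l m2,
          hβ'.spec₃ k j hj mm nn l m2,
          hα'.spec₁ i k j hi hj y (ctx.φ k t j (op (mc.zeta nn l) • mm) m2),
          ← ctx.φ_smul_right i k t (mc.zeta nn l) y mm,
          ctx.φ_assoc i k t j y (op (mc.zeta nn l) • mm) m2]
    · -- i ≠ t, h ≠ t : xN = en direct
      have hh : h ≠ t := hh'.symm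
      obtain ⟨x, rfl⟩ := (ce.en k h hh).surjective xN
      rcases eq_or_ne t j with rfl | hj'
      · -- (i≠,h≠,t) : m' tmulN-ind
        refine eq_of_closure (gen_top (cs.tmulN_tensor h hh))
          (fun v => ctx'.φ i h t (α' i k h (re.el i k hi y) (ce.en k h hh x)) v)
          (fun v => α' i k t (re.el i k hi y) (β' k h t (ce.en k h hh x) v))
          (fun a b => by try dsimp only
                         rw [ctx'.φ_add_right])
          (fun a b => by try dsimp only
                         rw [hβ'.add_right, hα'.add_right]) ?_ m'
        rintro _ ⟨mm, nn, rfl⟩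
        try dsimp only
        rw [hα'.spec₁ i k h hi hh y x, hcomp.phi_ikt i h hi hh (ctx.φ i k h y x) mm nn,
          hβ'.spec₂ k h hh x mm nn, hα'.spec₂ i k hi y (ctx.φ k h t x mm) nn,
          ctx.φ_assoc i k h t y x mm]
      · -- (i≠,h≠,j≠) : all direct
        have hj : j ≠ t := hj'.symm
        obtain ⟨z, rfl⟩ := (cs.ee h j hh hj).surjective m'
        rw [hα'.spec₁ i k h hi hh y x,
          hcomp.phi_ikj i h j hi hh hj (ctx.φ i k h y x) z,
          hβ'.spec₁ k h j hh hj x z, hα'.spec₁ i k j hi hj y (ctx.φ k h j x z),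
          ctx.φ_assoc i k h j y x z]

end Key
/-- the additive map `|α'| : L_m ⊗_{[A_i; M_ij]} N_m → [A'_i; M'_ij]`
induced by the row-column ligation is a homomorphism of
`[A'_i; M'_ij]`–`[A'_i; M'_ij]`-bimodules; moreover if `θ : L ⊗[R] N → S` is
surjective then it is surjective. -/

theorem stmt10 {n : ℕ} {A : Fin n → Type u} {M : Fin n → Fin n → Type u}
    [∀ i, Ring (A i)] [∀ i j, AddCommGroup (M i j)]
    [∀ i j, Module (A i) (M i j)] [∀ i j, Module ((A j)ᵐᵒᵖ) (M i j)]
    [∀ i j, SMulCommClass (A i) ((A j)ᵐᵒᵖ) (M i j)]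
    (ctx : GenMoritaCtx n A M) (t : Fin n)
    (S N L : Type u) [Ring S] [AddCommGroup N] [AddCommGroup L]
    [Module (A t) N] [Module Sᵐᵒᵖ N] [SMulCommClass (A t) Sᵐᵒᵖ N]
    [Module S L] [Module ((A t)ᵐᵒᵖ) L] [SMulCommClass S ((A t)ᵐᵒᵖ) L]
    (mc : MoritaCtx (A t) S N L)
    (A' : Fin n → Type u) (M' : Fin n → Fin n → Type u)
    [∀ i, Ring (A' i)] [∀ i j, AddCommGroup (M' i j)]
    [∀ i j, Module (A' i) (M' i j)] [∀ i j, Module ((A' j)ᵐᵒᵖ) (M' i j)]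
    [∀ i j, SMulCommClass (A' i) ((A' j)ᵐᵒᵖ) (M' i j)]
    (cs : CompSetup A M t S N L A' M')
    (ctx' : GenMoritaCtx n A' M')
    (hcomp : IsComposition A M t S N L A' M' ctx mc cs ctx')
    (Λ : Type u) [Ring Λ] (εΛ : Λ → ∀ i j, M i j) (hΛ : IsMatrixRing ctx Λ εΛ)
    (Λ' : Type u) [Ring Λ'] (εΛ' : Λ' → ∀ i j, M' i j) (hΛ' : IsMatrixRing ctx' Λ' εΛ')
    (NN : Fin n → Fin n → Type u) [∀ i j, AddCommGroup (NN i j)]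
    (ce : ColExc A M t N NN)
    (LL : Fin n → Fin n → Type u) [∀ i j, AddCommGroup (LL i j)]
    (re : RowExc A M t L LL)
    -- the [A_i; M_ij]–[A'_i; M'_ij]-bimodule structure on the column-excision N_m
    [Module Λ (∀ i j, NN i j)] [Module Λ'ᵐᵒᵖ (∀ i j, NN i j)]
    [SMulCommClass Λ Λ'ᵐᵒᵖ (∀ i j, NN i j)]
    (β : ∀ i k j, M i k → NN k j → NN i j)
    (hβ : ColExcLeft A M t N NN ctx ce β)
    (β' : ∀ i k j, NN i k → M' k j → NN i j)
    (hβ' : ColExcRight A M t S N L A' M' NN ctx mc cs ce β')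
    (hNsmulL : ∀ (c : Λ) (x : ∀ i j, NN i j) (i j : Fin n),
      (c • x) i j = ∑ k, β i k j (εΛ c i k) (x k j))
    (hNsmulR : ∀ (c' : Λ') (x : ∀ i j, NN i j) (i j : Fin n),
      (op c' • x) i j = ∑ k, β' i k j (x i k) (εΛ' c' k j))
    -- the [A'_i; M'_ij]–[A_i; M_ij]-bimodule structure on the row-excision L_m
    [Module Λ' (∀ i j, LL i j)] [Module Λᵐᵒᵖ (∀ i j, LL i j)]
    [SMulCommClass Λ' Λᵐᵒᵖ (∀ i j, LL i j)]
    (γ' : ∀ i k j, M' i k → LL k j → LL i j)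
    (hγ' : RowExcLeft A M t S N L A' M' LL ctx mc cs re γ')
    (γ : ∀ i k j, LL i k → M k j → LL i j)
    (hγ : RowExcRight A M t L LL ctx re γ)
    (hLsmulL : ∀ (c' : Λ') (y : ∀ i j, LL i j) (i j : Fin n),
      (c' • y) i j = ∑ k, γ' i k j (εΛ' c' i k) (y k j))
    (hLsmulR : ∀ (c : Λ) (y : ∀ i j, LL i j) (i j : Fin n),
      (op c • y) i j = ∑ k, γ i k j (y i k) (εΛ c k j))
    -- the row-column ligation and the map |α'| it induces into Λ' = [A'_i; M'_ij]
    (α' : ∀ i k j, LL i k → NN k j → M' i j)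
    (hα' : RowColLigation A M t S N L A' M' NN LL ctx mc cs ce re α')
    (Abar' : (∀ i j, LL i j) → (∀ i j, NN i j) → Λ')
    (hAbar' : ∀ y x, εΛ' (Abar' y x) = fun i j => ∑ k, α' i k j (y i k) (x k j))
    -- an abstract tensor product T = L_m ⊗_{[A_i; M_ij]} N_m with its
    -- left and right [A'_i; M'_ij]-module structure, and the induced map g = |α'|
    (T : Type u) [AddCommGroup T]
    (τT : (∀ i j, LL i j) → (∀ i j, NN i j) → T)
    (hT : IsBTensor Λ (fun (y : ∀ i j, LL i j) (c : Λ) => op c • y)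
      (fun (c : Λ) (x : ∀ i j, NN i j) => c • x) T τT)
    [Module Λ' T] [Module Λ'ᵐᵒᵖ T]
    (hTL : ∀ (c' : Λ') y x, c' • τT y x = τT (c' • y) x)
    (hTR : ∀ (c' : Λ') y x, op c' • τT y x = τT y (op c' • x))
    (g : T →+ Λ') (hg : ∀ y x, g (τT y x) = Abar' y x) :
    (∀ (c' : Λ') (z : T), g (c' • z) = c' * g z) ∧
    (∀ (c' : Λ') (z : T), g (op c' • z) = g z * c') ∧
    (TensorSurj mc.theta → Function.Surjective g) := by
  classical
  have hKL := keyL t S N L A' M' NN LL ctx mc cs ctx' hcomp ce re α' hα' γ' hγ'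
  have hKR := keyR t S N L A' M' NN LL ctx mc cs ctx' hcomp ce re α' hα' β' hβ'
  have hinj : Function.Injective εΛ' := hΛ'.bijective.1
  have α'zL : ∀ i k j (w : NN k j), α' i k j 0 w = 0 := fun i k j w =>
    map_zero (AddMonoidHom.mk' (fun z => α' i k j z w) (fun a b => hα'.add_left i k j a b w))
  have α'zR : ∀ i k j (v : LL i k), α' i k j v 0 = 0 := fun i k j v =>
    map_zero (AddMonoidHom.mk' (fun z => α' i k j v z) (fun a b => hα'.add_right i k j v a b))
  have α'sumL : ∀ (i k j : Fin n) (w : NN k j) (f : Fin n → LL i k),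
      α' i k j (∑ c, f c) w = ∑ c, α' i k j (f c) w := fun i k j w f =>
    map_sum (AddMonoidHom.mk' (fun z => α' i k j z w) (fun a b => hα'.add_left i k j a b w)) f
      Finset.univ
  have α'sumR : ∀ (i k j : Fin n) (v : LL i k) (f : Fin n → NN k j),
      α' i k j v (∑ c, f c) = ∑ c, α' i k j v (f c) := fun i k j v f =>
    map_sum (AddMonoidHom.mk' (fun z => α' i k j v z) (fun a b => hα'.add_right i k j v a b)) f
      Finset.univ
  have φ'sumL : ∀ (i h j : Fin n) (w : M' h j) (f : Fin n → M' i h),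
      ctx'.φ i h j (∑ c, f c) w = ∑ c, ctx'.φ i h j (f c) w := fun i h j w f =>
    map_sum (AddMonoidHom.mk' (fun z => ctx'.φ i h j z w)
      (fun a b => ctx'.φ_add_left i h j a b w)) f Finset.univ
  have φ'sumR : ∀ (i h j : Fin n) (v : M' i h) (f : Fin n → M' h j),
      ctx'.φ i h j v (∑ c, f c) = ∑ c, ctx'.φ i h j v (f c) := fun i h j v f =>
    map_sum (AddMonoidHom.mk' (fun z => ctx'.φ i h j v z)
      (fun a b => ctx'.φ_add_right i h j v a b)) f Finset.univ
  refine ⟨?_, ?_, ?_⟩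
  · -- left Λ'-linearity
    intro c' z
    refine eq_of_closure (gen_top hT) (fun z => g (c' • z)) (fun z => c' * g z)
      (fun a b => by rw [smul_add, map_add])
      (fun a b => by rw [map_add, mul_add]) ?_ z
    rintro _ ⟨y, x, rfl⟩
    rw [hTL, hg, hg]
    apply hinj
    rw [hΛ'.map_mul, hAbar', hAbar']
    funext i j
    show ∑ k, α' i k j ((c' • y) i k) (x k j)
        = matMul ctx' (εΛ' c') (fun a b => ∑ k, α' a k b (y a k) (x k b)) i j
    simp only [matMul]
    calc ∑ k, α' i k j ((c' • y) i k) (x k j)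
        = ∑ k, α' i k j (∑ h, γ' i h k (εΛ' c' i h) (y h k)) (x k j) :=
          Finset.sum_congr rfl fun k _ => by rw [hLsmulL]
      _ = ∑ k, ∑ h, α' i k j (γ' i h k (εΛ' c' i h) (y h k)) (x k j) :=
          Finset.sum_congr rfl fun k _ => α'sumL i k j (x k j) _
      _ = ∑ k, ∑ h, ctx'.φ i h j (εΛ' c' i h) (α' h k j (y h k) (x k j)) :=
          Finset.sum_congr rfl fun k _ => Finset.sum_congr rfl fun h _ =>
            (hKL i h k j (εΛ' c' i h) (y h k) (x k j)).symm
      _ = ∑ h, ∑ k, ctx'.φ i h j (εΛ' c' i h) (α' h k j (y h k) (x k j)) := Finset.sum_comm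
      _ = ∑ h, ctx'.φ i h j (εΛ' c' i h) (∑ k, α' h k j (y h k) (x k j)) :=
          Finset.sum_congr rfl fun h _ => (φ'sumR i h j (εΛ' c' i h) _).symm
  · -- right Λ'-linearity
    intro c' z
    refine eq_of_closure (gen_top hT) (fun z => g (op c' • z)) (fun z => g z * c')
      (fun a b => by rw [smul_add, map_add])
      (fun a b => by rw [map_add, add_mul]) ?_ z
    rintro _ ⟨y, x, rfl⟩
    rw [hTR, hg, hg]
    apply hinj
    rw [hΛ'.map_mul, hAbar', hAbar']
    funext i j
    show ∑ k, α' i k j (y i k) ((op c' • x) k j)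
        = matMul ctx' (fun a b => ∑ k, α' a k b (y a k) (x k b)) (εΛ' c') i j
    simp only [matMul]
    calc ∑ k, α' i k j (y i k) ((op c' • x) k j)
        = ∑ k, α' i k j (y i k) (∑ h, β' k h j (x k h) (εΛ' c' h j)) :=
          Finset.sum_congr rfl fun k _ => by rw [hNsmulR]
      _ = ∑ k, ∑ h, α' i k j (y i k) (β' k h j (x k h) (εΛ' c' h j)) :=
          Finset.sum_congr rfl fun k _ => α'sumR i k j (y i k) _
      _ = ∑ k, ∑ h, ctx'.φ i h j (α' i k h (y i k) (x k h)) (εΛ' c' h j) :=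
          Finset.sum_congr rfl fun k _ => Finset.sum_congr rfl fun h _ =>
            (hKR i k h j (y i k) (x k h) (εΛ' c' h j)).symm
      _ = ∑ h, ∑ k, ctx'.φ i h j (α' i k h (y i k) (x k h)) (εΛ' c' h j) := Finset.sum_comm
      _ = ∑ h, ctx'.φ i h j (∑ k, α' i k h (y i k) (x k h)) (εΛ' c' h j) :=
          Finset.sum_congr rfl fun h _ => (φ'sumL i h j (εΛ' c' h j) _).symm
  · -- surjectivity
    intro hθ
    set eΛ' : Λ' ≃+ (∀ i j, M' i j) :=
      AddEquiv.ofBijective (AddMonoidHom.mk' εΛ' hΛ'.map_add) hΛ'.bijective with heq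
    have hmem : ∀ y x, Abar' y x ∈ g.range := fun y x => ⟨τT y x, hg y x⟩
    have hpure : ∀ (i k j : Fin n) (Y0 : LL i k) (X0 : NN k j),
        eΛ'.symm (Pi.single i (Pi.single j (α' i k j Y0 X0))) ∈ g.range := by
      intro i k j Y0 X0
      have h2 : eΛ' (Abar' (Pi.single i (Pi.single k Y0)) (Pi.single k (Pi.single j X0)))
          = Pi.single i (Pi.single j (α' i k j Y0 X0)) := by
        show εΛ' _ = _
        rw [hAbar']
        funext a b
        rcases eq_or_ne a i with rfl | ha
        · rcases eq_or_ne b j with rfl | hb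
          · simp only [Pi.single_eq_same]
            refine (Finset.sum_eq_single k (fun c _ hc => ?_)
              (fun hk => (hk (Finset.mem_univ k)).elim)).trans ?_
            · rw [Pi.single_eq_of_ne hc, α'zL]
            · simp only [Pi.single_eq_same]
          · simp only [Pi.single_eq_same, Pi.single_eq_of_ne hb]
            refine Finset.sum_eq_zero fun c _ => ?_
            rcases eq_or_ne c k with rfl | hc
            · simp only [Pi.single_eq_same, Pi.single_eq_of_ne hb]
              exact α'zR _ _ _ _
            · simp only [Pi.single_eq_of_ne hc, Pi.zero_apply]
              exact α'zR _ _ _ _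
        · simp only [Pi.single_eq_of_ne ha, Pi.zero_apply]
          exact Finset.sum_eq_zero fun c _ => α'zL _ _ _ _
      rw [← h2, eΛ'.symm_apply_apply]
      exact hmem _ _
    have hsing : ∀ (i j : Fin n) (w : M' i j),
        eΛ'.symm (Pi.single i (Pi.single j w)) ∈ g.range := by
      intro i j w
      rcases eq_or_ne t i with rfl | hi'
      · rcases eq_or_ne t j with rfl | hj'
        · obtain ⟨s, rfl⟩ := cs.uS.surjective w
          refine mem_of_closure hθ (fun s => eΛ'.symm (Pi.single t (Pi.single t (cs.uS s))))
            (fun a b => by rw [map_add, Pi.single_add, Pi.single_add, map_add])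
            g.range ?_ s
          rintro _ ⟨l, nn, rfl⟩
          have hw : cs.uS (mc.theta l nn)
              = α' t t t (re.lp t l (ctx.δ t 1)) (ce.π t (ctx.δ t 1) nn) := by
            rw [hα'.spec₄ t l (ctx.δ t 1) (ctx.δ t 1) nn, ctx.φ_diag_left t t 1 (ctx.δ t 1),
              one_smul, AddEquiv.symm_apply_apply, op_one, one_smul]
          rw [hw]
          exact hpure _ _ _ _ _
        · have hj : j ≠ t := hj'.symm
          refine mem_of_closure (gen_top (cs.tmulL_tensor j hj))
            (fun w => eΛ'.symm (Pi.single t (Pi.single j w)))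
            (fun a b => by rw [Pi.single_add, Pi.single_add, map_add])
            g.range ?_ w
          rintro _ ⟨l, m, rfl⟩
          have hw : cs.tmulL j hj l m
              = α' t j j (re.lp j l m) (ce.en j j hj (ctx.δ j 1)) := by
            rw [hα'.spec₃ j j hj l m (ctx.δ j 1), ctx.φ_diag_right t j 1 m, op_one, one_smul]
          rw [hw]
          exact hpure _ _ _ _ _
      · have hi : i ≠ t := hi'.symm
        rcases eq_or_ne t j with rfl | hj'
        · refine mem_of_closure (gen_top (cs.tmulN_tensor i hi))
            (fun w => eΛ'.symm (Pi.single i (Pi.single t w)))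
            (fun a b => by rw [Pi.single_add, Pi.single_add, map_add])
            g.range ?_ w
          rintro _ ⟨m, nn, rfl⟩
          have hw : cs.tmulN i hi m nn
              = α' i i t (re.el i i hi (ctx.δ i 1)) (ce.π i m nn) := by
            rw [hα'.spec₂ i i hi (ctx.δ i 1) m nn, ctx.φ_diag_left i t 1 m, one_smul]
          rw [hw]
          exact hpure _ _ _ _ _
        · have hj : j ≠ t := hj'.symm
          obtain ⟨x, rfl⟩ := (cs.ee i j hi hj).surjective w
          have hw : cs.ee i j hi hj x
              = α' i j j (re.el i j hi x) (ce.en j j hj (ctx.δ j 1)) := by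
            rw [hα'.spec₁ i j j hi hj x (ctx.δ j 1), ctx.φ_diag_right i j 1 x, op_one, one_smul]
          rw [hw]
          exact hpure _ _ _ _ _
    intro lam
    have hdec : eΛ' lam = ∑ i, ∑ j, Pi.single (M := fun a => ∀ b, M' a b) i
        (Pi.single j (εΛ' lam i j)) := by
      funext a b
      simp only [Finset.sum_apply]
      have h1 : ∀ c : Fin n, c ∈ Finset.univ → c ≠ a →
          ∑ d : Fin n, Pi.single (M := fun a => ∀ b, M' a b) c
            (Pi.single d (εΛ' lam c d)) a b = 0 :=
        fun c _ hc => Finset.sum_eq_zero fun d _ => by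
          rw [Pi.single_eq_of_ne (Ne.symm hc)]; rfl
      rw [Finset.sum_eq_single a h1 (fun h => (h (Finset.mem_univ a)).elim)]
      have h2 : ∀ d : Fin n, d ∈ Finset.univ → d ≠ b →
          Pi.single (M := fun a => ∀ b, M' a b) a (Pi.single d (εΛ' lam a d)) a b = 0 :=
        fun d _ hd => by rw [Pi.single_eq_same, Pi.single_eq_of_ne (Ne.symm hd)]
      rw [Finset.sum_eq_single b h2 (fun h => (h (Finset.mem_univ b)).elim),
        Pi.single_eq_same, Pi.single_eq_same]
      rfl
    have hgoal : lam ∈ g.range := by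
      have h3 : lam = eΛ'.symm (∑ i, ∑ j, Pi.single (M := fun a => ∀ b, M' a b) i
          (Pi.single j (εΛ' lam i j))) := by
        rw [← hdec, AddEquiv.symm_apply_apply]
      rw [h3, map_sum]
      refine AddSubgroup.sum_mem _ fun i _ => ?_
      rw [map_sum]
      exact AddSubgroup.sum_mem _ fun j _ => hsing i j _
    exact AddMonoidHom.mem_range.mp hgoal
end

section
/- In the setting of a generalised Morita context (A_i; M_ij; φ_ikj) of size n with A_t = R, a Morita context (R, S; N, L; ζ, θ), their composition (A′_i; M′_ij; φ′_ikj), the column-excision N_m, the row-excision L_m, and the induced bimodule homomorphisms |α| : N_m ⊗_{[A′_i; M′_ij]} L_m → [A_i; M_ij] and |α′| : L_m ⊗_{[A_i; M_ij]} N_m → [A′_i; M′_ij] of the column-row and row-column ligations, the maps |α| and |α′| satisfy the mixed associativity conditions: |α|(x ⊗ y)·x′ = x·|α′|(y ⊗ x′) in N_m for all x, x′ ∈ N_m and y ∈ L_m, and |α′|(y ⊗ x)·y′ = y·|α|(x ⊗ y′) in L_m for all y, y′ ∈ L_m and x ∈ N_m. -/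
universe u

open MulOpposite

variable {n : ℕ} {A : Fin n → Type u} {M : Fin n → Fin n → Type u}
    [∀ i, Ring (A i)] [∀ i j, AddCommGroup (M i j)]
    [∀ i j, Module (A i) (M i j)] [∀ i j, Module ((A j)ᵐᵒᵖ) (M i j)]
    [∀ i j, SMulCommClass (A i) ((A j)ᵐᵒᵖ) (M i j)]

section Aux

private theorem bsurj {A M X T : Type u} [Ring A] [AddCommGroup M] [AddCommGroup X]
    [AddCommGroup T] {ra : M → A → M} {la : A → X → X} {τ : M → X → T}
    (ht : IsBTensor A ra la T τ) :
    AddSubgroup.closure {z : T | ∃ m x, z = τ m x} = ⊤ := by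
  set H : AddSubgroup T := AddSubgroup.closure {z : T | ∃ m x, z = τ m x} with hH
  obtain ⟨b1, b2, b3⟩ := ht.balanced
  obtain ⟨h, hspec, huniq⟩ := ht.lift (T ⧸ H) (fun m x => QuotientAddGroup.mk (τ m x))
    ⟨fun m m' x => by dsimp only; rw [b1]; rfl,
     fun m x x' => by dsimp only; rw [b2]; rfl,
     fun a m x => by dsimp only; rw [b3]⟩
  have e1 : QuotientAddGroup.mk' H = h := huniq _ fun m x => rfl
  have e2 : (0 : T →+ T ⧸ H) = h := huniq _ fun m x => by
    simpa using ((QuotientAddGroup.eq_zero_iff (τ m x)).2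
      (AddSubgroup.subset_closure (show ∃ m' x', τ m x = τ m' x' from ⟨m, x, rfl⟩))).symm
  rw [AddSubgroup.eq_top_iff']
  intro z
  have hz : QuotientAddGroup.mk' H z = 0 := by rw [e1, ← e2]; rfl
  exact (QuotientAddGroup.eq_zero_iff z).1 hz

private theorem bext {A M X T H : Type u} [Ring A] [AddCommGroup M] [AddCommGroup X]
    [AddCommGroup T] [AddCommGroup H] {ra : M → A → M} {la : A → X → X} {τ : M → X → T}
    (ht : IsBTensor A ra la T τ) (f g : T → H)
    (hf : ∀ a b, f (a + b) = f a + f b) (hg : ∀ a b, g (a + b) = g a + g b)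
    (hp : ∀ m x, f (τ m x) = g (τ m x)) (z : T) : f z = g z := by
  have hz : z ∈ AddSubgroup.closure {z : T | ∃ m x, z = τ m x} := by
    rw [bsurj ht]; exact AddSubgroup.mem_top z
  let F : T →+ H := AddMonoidHom.mk' f hf
  let G : T →+ H := AddMonoidHom.mk' g hg
  refine AddSubgroup.closure_induction ?_ ?_ ?_ ?_ hz
  · rintro _ ⟨m, x, rfl⟩; exact hp m x
  · exact (map_zero F).trans (map_zero G).symm
  · intro a b _ _ ha hb
    rw [hf, hg, ha, hb]
  · intro a _ ha
    have : f (-a) = F (-a) := rfl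
    rw [this, map_neg F, show g (-a) = G (-a) from rfl, map_neg G]
    exact congrArg Neg.neg ha

end Aux

/-- the maps `|α|` and `|α'|` induced by the column-row and
row-column ligations satisfy the mixed associativity conditions:
`|α|(x ⊗ y)·x' = x·|α'|(y ⊗ x')` in `N_m` and
`|α'|(y ⊗ x)·y' = y·|α|(x ⊗ y')` in `L_m`. -/

theorem stmt11 {n : ℕ} {A : Fin n → Type u} {M : Fin n → Fin n → Type u}
    [∀ i, Ring (A i)] [∀ i j, AddCommGroup (M i j)]
    [∀ i j, Module (A i) (M i j)] [∀ i j, Module ((A j)ᵐᵒᵖ) (M i j)]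
    [∀ i j, SMulCommClass (A i) ((A j)ᵐᵒᵖ) (M i j)]
    (ctx : GenMoritaCtx n A M) (t : Fin n)
    (S N L : Type u) [Ring S] [AddCommGroup N] [AddCommGroup L]
    [Module (A t) N] [Module Sᵐᵒᵖ N] [SMulCommClass (A t) Sᵐᵒᵖ N]
    [Module S L] [Module ((A t)ᵐᵒᵖ) L] [SMulCommClass S ((A t)ᵐᵒᵖ) L]
    (mc : MoritaCtx (A t) S N L)
    (A' : Fin n → Type u) (M' : Fin n → Fin n → Type u)
    [∀ i, Ring (A' i)] [∀ i j, AddCommGroup (M' i j)]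
    [∀ i j, Module (A' i) (M' i j)] [∀ i j, Module ((A' j)ᵐᵒᵖ) (M' i j)]
    [∀ i j, SMulCommClass (A' i) ((A' j)ᵐᵒᵖ) (M' i j)]
    (cs : CompSetup A M t S N L A' M')
    (ctx' : GenMoritaCtx n A' M')
    (hcomp : IsComposition A M t S N L A' M' ctx mc cs ctx')
    (Λ : Type u) [Ring Λ] (εΛ : Λ → ∀ i j, M i j) (hΛ : IsMatrixRing ctx Λ εΛ)
    (Λ' : Type u) [Ring Λ'] (εΛ' : Λ' → ∀ i j, M' i j) (hΛ' : IsMatrixRing ctx' Λ' εΛ')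
    (NN : Fin n → Fin n → Type u) [∀ i j, AddCommGroup (NN i j)]
    (ce : ColExc A M t N NN)
    (LL : Fin n → Fin n → Type u) [∀ i j, AddCommGroup (LL i j)]
    (re : RowExc A M t L LL)
    -- the [A_i; M_ij]–[A'_i; M'_ij]-bimodule structure on the column-excision N_m
    [Module Λ (∀ i j, NN i j)] [Module Λ'ᵐᵒᵖ (∀ i j, NN i j)]
    [SMulCommClass Λ Λ'ᵐᵒᵖ (∀ i j, NN i j)]
    (β : ∀ i k j, M i k → NN k j → NN i j)
    (hβ : ColExcLeft A M t N NN ctx ce β)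
    (β' : ∀ i k j, NN i k → M' k j → NN i j)
    (hβ' : ColExcRight A M t S N L A' M' NN ctx mc cs ce β')
    (hNsmulL : ∀ (c : Λ) (x : ∀ i j, NN i j) (i j : Fin n),
      (c • x) i j = ∑ k, β i k j (εΛ c i k) (x k j))
    (hNsmulR : ∀ (c' : Λ') (x : ∀ i j, NN i j) (i j : Fin n),
      (op c' • x) i j = ∑ k, β' i k j (x i k) (εΛ' c' k j))
    -- the [A'_i; M'_ij]–[A_i; M_ij]-bimodule structure on the row-excision L_m
    [Module Λ' (∀ i j, LL i j)] [Module Λᵐᵒᵖ (∀ i j, LL i j)]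
    [SMulCommClass Λ' Λᵐᵒᵖ (∀ i j, LL i j)]
    (γ' : ∀ i k j, M' i k → LL k j → LL i j)
    (hγ' : RowExcLeft A M t S N L A' M' LL ctx mc cs re γ')
    (γ : ∀ i k j, LL i k → M k j → LL i j)
    (hγ : RowExcRight A M t L LL ctx re γ)
    (hLsmulL : ∀ (c' : Λ') (y : ∀ i j, LL i j) (i j : Fin n),
      (c' • y) i j = ∑ k, γ' i k j (εΛ' c' i k) (y k j))
    (hLsmulR : ∀ (c : Λ) (y : ∀ i j, LL i j) (i j : Fin n),
      (op c • y) i j = ∑ k, γ i k j (y i k) (εΛ c k j))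
    -- the column-row ligation and the map |α| it induces into Λ = [A_i; M_ij]
    (α : ∀ i k j, NN i k → LL k j → M i j)
    (hα : ColRowLigation A M t S N L NN LL ctx mc ce re α)
    (Abar : (∀ i j, NN i j) → (∀ i j, LL i j) → Λ)
    (hAbar : ∀ x y, εΛ (Abar x y) = fun i j => ∑ k, α i k j (x i k) (y k j))
    -- the row-column ligation and the map |α'| it induces into Λ' = [A'_i; M'_ij]
    (α' : ∀ i k j, LL i k → NN k j → M' i j)
    (hα' : RowColLigation A M t S N L A' M' NN LL ctx mc cs ce re α')
    (Abar' : (∀ i j, LL i j) → (∀ i j, NN i j) → Λ')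
    (hAbar' : ∀ y x, εΛ' (Abar' y x) = fun i j => ∑ k, α' i k j (y i k) (x k j)) :
    (∀ (x x' : ∀ i j, NN i j) (y : ∀ i j, LL i j),
      Abar x y • x' = op (Abar' y x') • x) ∧
    (∀ (y y' : ∀ i j, LL i j) (x : ∀ i j, NN i j),
      Abar' y x • y' = op (Abar x y') • y) := by
  have key1 : ∀ i h k j (u : NN i h) (v : LL h k) (w : NN k j),
      β i k j (α i h k u v) w = β' i h j u (α' h k j v w) := by
    intro i h k j u v w
    by_cases hh : h = t
    · subst hh
      by_cases hj : j = h
      · subst hj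
        refine bext (ce.π_tensor i)
          (fun z => β i k j (α i j k z v) w)
          (fun z => β' i j j z (α' j k j v w))
          (fun a b => by rw [hα.add_left, hβ.add_left])
          (fun a b => by rw [hβ'.add_left]) ?_ u
        intro m nn
        refine bext (re.lp_tensor k)
          (fun z => β i k j (α i j k (ce.π i m nn) z) w)
          (fun z => β' i j j (ce.π i m nn) (α' j k j z w))
          (fun a b => by rw [hα.add_right, hβ.add_left])
          (fun a b => by rw [hα'.add_left, hβ'.add_right]) ?_ v
        intro l yy
        refine bext (ce.π_tensor k)
          (fun z => β i k j (α i j k (ce.π i m nn) (re.lp k l yy)) z)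
          (fun z => β' i j j (ce.π i m nn) (α' j k j (re.lp k l yy) z))
          (fun a b => by rw [hβ.add_right])
          (fun a b => by rw [hα'.add_right, hβ'.add_right]) ?_ w
        intro m' nn'
        obtain ⟨rr, hrr⟩ : ∃ rr, ctx.φ _ _ _ yy m' = ctx.δ _ rr :=
          ⟨(ctx.δ _).symm (ctx.φ _ _ _ yy m'), ((ctx.δ _).apply_symm_apply _).symm⟩
        rw [hα.spec_t, hβ.spec_t, hα'.spec₄, hβ'.spec₄, ← ctx.φ_assoc, hrr,
          AddEquiv.symm_apply_apply, ctx.φ_diag_right,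
          (ce.π_tensor i).balanced.2.2, (ce.π_tensor i).balanced.2.2]
        dsimp only
        rw [mc.assoc_left, mc.theta_balanced]
      · obtain ⟨zz, rfl⟩ := (ce.en k j hj).surjective w
        refine bext (ce.π_tensor i)
          (fun z => β i k j (α i h k z v) (ce.en k j hj zz))
          (fun z => β' i h j z (α' h k j v (ce.en k j hj zz)))
          (fun a b => by rw [hα.add_left, hβ.add_left])
          (fun a b => by rw [hβ'.add_left]) ?_ u
        intro m nn
        refine bext (re.lp_tensor k)
          (fun z => β i k j (α i h k (ce.π i m nn) z) (ce.en k j hj zz))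
          (fun z => β' i h j (ce.π i m nn) (α' h k j z (ce.en k j hj zz)))
          (fun a b => by rw [hα.add_right, hβ.add_left])
          (fun a b => by rw [hα'.add_left, hβ'.add_right]) ?_ v
        intro l yy
        rw [hα.spec_t, hβ.spec_ne _ _ _ hj, hα'.spec₃ _ _ hj, hβ'.spec₃ _ _ hj,
          ctx.φ_assoc]
    · obtain ⟨xx, rfl⟩ := (ce.en i h hh).surjective u
      obtain ⟨yv, rfl⟩ := (re.el h k hh).surjective v
      by_cases hj : j = t
      · subst hj
        refine bext (ce.π_tensor k)
          (fun z => β i k j (α i h k (ce.en i h hh xx) (re.el h k hh yv)) z)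
          (fun z => β' i h j (ce.en i h hh xx) (α' h k j (re.el h k hh yv) z))
          (fun a b => by rw [hβ.add_right])
          (fun a b => by rw [hα'.add_right, hβ'.add_right]) ?_ w
        intro m nn
        rw [hα.spec_ne _ _ _ hh, hβ.spec_t, hα'.spec₂ _ _ hh, hβ'.spec₂ _ _ hh,
          ctx.φ_assoc]
      · obtain ⟨zz, rfl⟩ := (ce.en k j hj).surjective w
        rw [hα.spec_ne _ _ _ hh, hβ.spec_ne _ _ _ hj, hα'.spec₁ _ _ _ hh hj,
          hβ'.spec₁ _ _ _ hh hj, ctx.φ_assoc]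
  have key2 : ∀ i h k j (v : LL i h) (u : NN h k) (v' : LL k j),
      γ' i k j (α' i h k v u) v' = γ i h j v (α h k j u v') := by
    intro i h k j v u v'
    by_cases hi : i = t
    · subst hi
      by_cases hk : k = i
      · subst hk
        refine bext (re.lp_tensor h)
          (fun z => γ' k k j (α' k h k z u) v')
          (fun z => γ k h j z (α h k j u v'))
          (fun a b => by rw [hα'.add_left, hγ'.add_left])
          (fun a b => by rw [hγ.add_left]) ?_ v
        intro l m
        refine bext (ce.π_tensor h)
          (fun z => γ' k k j (α' k h k (re.lp h l m) z) v')
          (fun z => γ k h j (re.lp h l m) (α h k j z v'))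
          (fun a b => by rw [hα'.add_right, hγ'.add_left])
          (fun a b => by rw [hα.add_left, hγ.add_right]) ?_ u
        intro m' nn
        refine bext (re.lp_tensor j)
          (fun z => γ' k k j (α' k h k (re.lp h l m) (ce.π h m' nn)) z)
          (fun z => γ k h j (re.lp h l m) (α h k j (ce.π h m' nn) z))
          (fun a b => by rw [hγ'.add_right])
          (fun a b => by rw [hα.add_right, hγ.add_right]) ?_ v'
        intro l' m''
        obtain ⟨rr, hrr⟩ : ∃ rr, ctx.φ _ _ _ m m' = ctx.δ _ rr :=
          ⟨(ctx.δ _).symm (ctx.φ _ _ _ m m'), ((ctx.δ _).apply_symm_apply _).symm⟩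
        rw [hα'.spec₄, hγ'.spec₄, hα.spec_t, hγ.spec_t, ctx.φ_assoc,
          ctx.φ_smul_right, hrr, AddEquiv.symm_apply_apply, ← ctx.δ_mul_right,
          ctx.φ_diag_left, mc.theta_balanced, mc.assoc_right, mc.zeta_left,
          (re.lp_tensor j).balanced.2.2]
      · obtain ⟨zz, rfl⟩ := (ce.en h k hk).surjective u
        obtain ⟨yv', rfl⟩ := (re.el k j hk).surjective v'
        refine bext (re.lp_tensor h)
          (fun z => γ' i k j (α' i h k z (ce.en h k hk zz)) (re.el k j hk yv'))
          (fun z => γ i h j z (α h k j (ce.en h k hk zz) (re.el k j hk yv')))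
          (fun a b => by rw [hα'.add_left, hγ'.add_left])
          (fun a b => by rw [hγ.add_left]) ?_ v
        intro l m
        rw [hα'.spec₃ _ _ hk, hγ'.spec₂ _ _ hk, hα.spec_ne _ _ _ hk, hγ.spec_t,
          ctx.φ_assoc]
    · obtain ⟨xx, rfl⟩ := (re.el i h hi).surjective v
      by_cases hk : k = t
      · subst hk
        refine bext (ce.π_tensor h)
          (fun z => γ' i k j (α' i h k (re.el i h hi xx) z) v')
          (fun z => γ i h j (re.el i h hi xx) (α h k j z v'))
          (fun a b => by rw [hα'.add_right, hγ'.add_left])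
          (fun a b => by rw [hα.add_left, hγ.add_right]) ?_ u
        intro m nn
        refine bext (re.lp_tensor j)
          (fun z => γ' i k j (α' i h k (re.el i h hi xx) (ce.π h m nn)) z)
          (fun z => γ i h j (re.el i h hi xx) (α h k j (ce.π h m nn) z))
          (fun a b => by rw [hγ'.add_right])
          (fun a b => by rw [hα.add_right, hγ.add_right]) ?_ v'
        intro l m'
        rw [hα'.spec₂ _ _ hi, hγ'.spec₃ _ _ hi, hα.spec_t, hγ.spec_ne _ _ _ hi,
          ← ctx.φ_smul_right, ctx.φ_assoc]
      · obtain ⟨zz, rfl⟩ := (ce.en h k hk).surjective u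
        obtain ⟨yv', rfl⟩ := (re.el k j hk).surjective v'
        rw [hα'.spec₁ _ _ _ hi hk, hγ'.spec₁ _ _ _ hi hk, hα.spec_ne _ _ _ hk,
          hγ.spec_ne _ _ _ hi, ctx.φ_assoc]
  constructor
  · intro x x' y
    funext i j
    rw [hNsmulL, hNsmulR]
    have hA : ∀ i k, εΛ (Abar x y) i k = ∑ h, α i h k (x i h) (y h k) := fun i k =>
      congrFun (congrFun (hAbar x y) i) k
    have hA' : ∀ k j, εΛ' (Abar' y x') k j = ∑ h, α' k h j (y k h) (x' h j) := fun k j =>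
      congrFun (congrFun (hAbar' y x') k) j
    calc ∑ k, β i k j (εΛ (Abar x y) i k) (x' k j)
        = ∑ k, ∑ h, β i k j (α i h k (x i h) (y h k)) (x' k j) := by
          refine Finset.sum_congr rfl fun k _ => ?_
          rw [hA]
          exact map_sum (AddMonoidHom.mk' (fun z => β i k j z (x' k j))
            (fun a b => hβ.add_left i k j a b (x' k j))) _ _
      _ = ∑ h, ∑ k, β i k j (α i h k (x i h) (y h k)) (x' k j) := Finset.sum_comm
      _ = ∑ h, ∑ k, β' i h j (x i h) (α' h k j (y h k) (x' k j)) :=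
          Finset.sum_congr rfl fun h _ => Finset.sum_congr rfl fun k _ =>
            key1 i h k j _ _ _
      _ = ∑ h, β' i h j (x i h) (εΛ' (Abar' y x') h j) := by
          refine Finset.sum_congr rfl fun h _ => ?_
          rw [hA']
          exact (map_sum (AddMonoidHom.mk' (fun z => β' i h j (x i h) z)
            (hβ'.add_right i h j (x i h))) _ _).symm
  · intro y y' x
    funext i j
    rw [hLsmulL, hLsmulR]
    have hA : ∀ k j, εΛ (Abar x y') k j = ∑ h, α k h j (x k h) (y' h j) := fun k j =>
      congrFun (congrFun (hAbar x y') k) j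
    have hA' : ∀ i k, εΛ' (Abar' y x) i k = ∑ h, α' i h k (y i h) (x h k) := fun i k =>
      congrFun (congrFun (hAbar' y x) i) k
    calc ∑ k, γ' i k j (εΛ' (Abar' y x) i k) (y' k j)
        = ∑ k, ∑ h, γ' i k j (α' i h k (y i h) (x h k)) (y' k j) := by
          refine Finset.sum_congr rfl fun k _ => ?_
          rw [hA']
          exact map_sum (AddMonoidHom.mk' (fun z => γ' i k j z (y' k j))
            (fun a b => hγ'.add_left i k j a b (y' k j))) _ _
      _ = ∑ h, ∑ k, γ' i k j (α' i h k (y i h) (x h k)) (y' k j) := Finset.sum_comm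
      _ = ∑ h, ∑ k, γ i h j (y i h) (α h k j (x h k) (y' k j)) :=
          Finset.sum_congr rfl fun h _ => Finset.sum_congr rfl fun k _ =>
            key2 i h k j _ _ _
      _ = ∑ h, γ i h j (y i h) (εΛ (Abar x y') h j) := by
          refine Finset.sum_congr rfl fun h _ => ?_
          rw [hA]
          exact (map_sum (AddMonoidHom.mk' (fun z => γ i h j (y i h) z)
            (hγ.add_right i h j (y i h))) _ _).symm
end
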